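/- arXiv:1911.08741 — 12 statements merged into one kernel-verified Lean document; each statement's English description precedes it below -/
import Mathlib

section
/- Let X be a nonempty proper, noncompact geodesic metric space and let x0, x ∈ X. Then the limit u_{x0}(x) := lim_{r→∞} [d(x, S_r(x0)) − r] exists, i.e., there is a real number L such that the function r ↦ d(x, S_r(x0)) − r tends to L as r → ∞. -/
open Metric Filter

/-- A metric space is geodesic if every pair of points is joined by a unit-speed
minimizing geodesic segment. -/
def IsGeodesicSpace (X : Type*) [MetricSpace X] : Prop :=
  ∀ x y : X, ∃ γ : ℝ → X, γ 0 = x ∧ γ (dist x y) = y ∧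
    ∀ s ∈ Set.Icc (0 : ℝ) (dist x y), ∀ t ∈ Set.Icc (0 : ℝ) (dist x y),
      dist (γ s) (γ t) = |s - t|

/-- Far points exist in a proper noncompact space. -/
lemma exists_far {X : Type*} [MetricSpace X] [ProperSpace X] [NoncompactSpace X]
    (x0 : X) (r : ℝ) : ∃ y : X, r < dist x0 y := by
  by_contra h
  push_neg at h
  have : (Metric.closedBall x0 r) = Set.univ := by
    ext y; simp [Metric.mem_closedBall, dist_comm, h y]
  exact (isCompact_closedBall x0 r).ne_univ this

/-- In a geodesic proper noncompact space, every sphere of nonneg radius is nonempty. -/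
lemma sphere_nonempty' {X : Type*} [MetricSpace X] [ProperSpace X] [NoncompactSpace X]
    (hgeo : IsGeodesicSpace X) (x0 : X) {r : ℝ} (hr : 0 ≤ r) :
    (Metric.sphere x0 r).Nonempty := by
  obtain ⟨y, hy⟩ := exists_far x0 r
  obtain ⟨γ, h0, _, hiso⟩ := hgeo x0 y
  refine ⟨γ r, ?_⟩
  have h1 : dist (γ 0) (γ r) = |0 - r| := by
    apply hiso 0 ⟨le_refl 0, dist_nonneg⟩ r ⟨hr, le_of_lt hy⟩
  simp only [Metric.mem_sphere]
  rw [dist_comm, ← h0]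
  rw [h1]; rw [abs_of_nonpos (by linarith)]; ring

/-- on a nonempty proper noncompact geodesic space, the limit
`u_{x0}(x) = lim_{r→∞} [d(x, S_r(x0)) − r]` exists. -/
theorem stmt0 {X : Type*} [MetricSpace X] [Nonempty X] [ProperSpace X] [NoncompactSpace X]
    (hgeo : IsGeodesicSpace X) (x0 x : X) :
    ∃ L : ℝ, Tendsto (fun r : ℝ => infDist x (sphere x0 r) - r) atTop (nhds L) := by
  set f : ℝ → ℝ := fun r => infDist x (sphere x0 r) - r with hf
  set d : ℝ := dist x0 x with hd
  -- monotonicity for d ≤ r ≤ R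
  have key : ∀ r R : ℝ, d ≤ r → r ≤ R → f r ≤ f R := by
    intro r R hdr hrR
    have hr0 : (0 : ℝ) ≤ r := le_trans dist_nonneg hdr
    have hR : (0 : ℝ) ≤ R := hr0.trans hrR
    have hne : (sphere x0 R).Nonempty := sphere_nonempty' hgeo x0 hR
    obtain ⟨w, hw, hwd⟩ := (isCompact_sphere x0 R).exists_infDist_eq_dist hne x
    have hdistw : dist x0 w = R := by rwa [Metric.mem_sphere, dist_comm] at hw
    obtain ⟨γ, h0, hend, hiso⟩ := hgeo x w
    set D : ℝ := dist x w with hD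
    have hD0 : (0 : ℝ) ≤ D := dist_nonneg
    have hγlip : LipschitzOnWith 1 γ (Set.Icc 0 D) := by
      intro s hs t ht
      have := hiso s hs t ht
      rw [edist_dist, edist_dist, this]
      simp [Real.dist_eq]
    have hgcont : ContinuousOn (fun t => dist x0 (γ t)) (Set.Icc 0 D) :=
      (continuous_const.dist continuous_id).comp_continuousOn hγlip.continuousOn
    have hg0 : dist x0 (γ 0) = d := by rw [h0]
    have hgD : dist x0 (γ D) = R := by rw [hend, hdistw]
    have hmem : r ∈ Set.Icc (dist x0 (γ 0)) (dist x0 (γ D)) := by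
      rw [hg0, hgD]; exact ⟨hdr, hrR⟩
    obtain ⟨t, ht, hgt0⟩ := intermediate_value_Icc hD0 hgcont hmem
    have hgt : dist x0 (γ t) = r := hgt0
    have hsph : γ t ∈ sphere x0 r := by
      rw [Metric.mem_sphere, dist_comm]; exact hgt
    have h1 : infDist x (sphere x0 r) ≤ dist x (γ t) := infDist_le_dist_of_mem hsph
    have hxt : dist x (γ t) = t := by
      have := hiso 0 ⟨le_refl 0, hD0⟩ t ht
      rw [← h0, this, abs_of_nonpos (by linarith [ht.1])]; ring
    have htw : dist (γ t) w = D - t := by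
      have := hiso t ht D ⟨hD0, le_refl D⟩
      rw [hD] at this
      rw [← hD] at this
      rw [hend] at this
      rw [this, abs_of_nonpos (by linarith [ht.2])]; ring
    have h3 : R - r ≤ dist (γ t) w := by
      have := dist_triangle x0 (γ t) w
      rw [hdistw, hgt] at this; linarith
    simp only [hf]
    rw [hwd]
    rw [hxt] at h1
    linarith [htw, h3]
  -- bounded above by dist x x0
  have hbd : ∀ r : ℝ, 0 ≤ r → f r ≤ dist x x0 := by
    intro r hr
    obtain ⟨z, hz⟩ := sphere_nonempty' hgeo x0 hr
    have h1 : infDist x (sphere x0 r) ≤ dist x z := infDist_le_dist_of_mem hz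
    have h2 : dist x z ≤ dist x x0 + dist x0 z := dist_triangle _ _ _
    rw [Metric.mem_sphere] at hz
    rw [dist_comm] at hz
    simp only [hf]; rw [hz] at h2; linarith
  set F : ℝ → ℝ := fun r => f (max r d) with hF
  have hFmono : Monotone F := fun a b hab =>
    key _ _ (le_max_right a d) (max_le_max hab (le_refl d))
  have hFbdd : BddAbove (Set.range F) := by
    refine ⟨dist x x0, ?_⟩
    rintro _ ⟨r, rfl⟩
    exact hbd _ (le_trans dist_nonneg (le_max_right r d))
  refine ⟨⨆ r, F r, ?_⟩
  have hFlim : Tendsto F atTop (nhds (⨆ r, F r)) := tendsto_atTop_ciSup hFmono hFbdd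
  refine hFlim.congr' ?_
  filter_upwards [eventually_ge_atTop d] with r hr
  simp [hF, max_eq_left hr]
end

section
/- Let X be a nonempty proper, noncompact geodesic metric space and x0 ∈ X. For every dl-function u : X → ℝ with u(x0) = 0, one has u_{x0}(x) ≤ u(x) for all x ∈ X, where u_{x0} is the point-assigned dl-function based at x0. -/
open Metric Filter

/-- A distance-like function: a locally uniform limit of `d(·, H_n) − c_n` where the
closed nonempty sets `H_n` diverge to infinity. -/
def IsDLFunction {X : Type*} [MetricSpace X] (u : X → ℝ) : Prop :=
  ∃ (H : ℕ → Set X) (c : ℕ → ℝ),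
    (∀ n, (H n).Nonempty) ∧ (∀ n, IsClosed (H n)) ∧
    (∃ z0 : X, Tendsto (fun n => infDist z0 (H n)) atTop atTop) ∧
    ∀ x : X, Tendsto (fun n => infDist x (H n) - c n) atTop (nhds (u x))

/-- Key geometric estimate: if `dist x0 x ≤ infDist x0 H`, then the point on a geodesic
from `x` to a near-minimizer `h ∈ H` at distance `R = infDist x0 H` from `x0` witnesses
`infDist x (sphere x0 R) - R ≤ (infDist x H - R) + ε`. -/
lemma key_est {X : Type*} [MetricSpace X] (hgeo : IsGeodesicSpace X)
    (x0 x : X) (H : Set X) (hne : H.Nonempty) (ε : ℝ) (hε : 0 < ε)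
    (hle : dist x0 x ≤ infDist x0 H) :
    infDist x (sphere x0 (infDist x0 H)) - infDist x0 H
      ≤ (infDist x H - infDist x0 H) + ε := by
  set R := infDist x0 H with hR
  obtain ⟨h, hH, hdh⟩ : ∃ h ∈ H, dist x h < infDist x H + ε := by
    exact (infDist_lt_iff hne).1 (by linarith [infDist_nonneg (s := H) (x := x)])
  have hRh : R ≤ dist x0 h := infDist_le_dist_of_mem hH
  obtain ⟨γ, hγ0, hγD, hiso⟩ := hgeo x h
  set D := dist x h with hD
  have hD0 : (0 : ℝ) ≤ D := dist_nonneg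
  -- γ is continuous on [0, D]
  have hcont : ContinuousOn γ (Set.Icc 0 D) := by
    apply LipschitzOnWith.continuousOn (K := 1)
    intro s hs t ht
    rw [edist_dist, hiso s hs t ht]
    simp [edist_dist, Real.dist_eq]
  have hf : ContinuousOn (fun t => dist x0 (γ t)) (Set.Icc 0 D) :=
    (continuous_dist.comp (continuous_const.prodMk continuous_id)).comp_continuousOn hcont
  have hmem : R ∈ Set.Icc (dist x0 (γ 0)) (dist x0 (γ D)) := by
    rw [hγ0, hγD]; exact ⟨hle, hRh⟩
  obtain ⟨t, ht, hfeq0⟩ := intermediate_value_Icc hD0 hf hmem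
  have hfeq : dist x0 (γ t) = R := hfeq0
  have hxt : dist x (γ t) = t := by
    have := hiso 0 ⟨le_refl 0, hD0⟩ t ht
    rw [hγ0] at this
    rw [this, abs_of_nonpos (by linarith [ht.1]), neg_sub, sub_zero]
  have hth : dist (γ t) h = D - t := by
    have := hiso t ht D ⟨hD0, le_refl D⟩
    rw [hγD] at this
    rw [this, abs_of_nonpos (by linarith [ht.2]), neg_sub]
  have hsp : γ t ∈ sphere x0 R := by
    simpa [mem_sphere, dist_comm] using hfeq
  have h1 : infDist x (sphere x0 R) ≤ t := by
    have := infDist_le_dist_of_mem (x := x) hsp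
    rwa [hxt] at this
  have h2 : dist x0 h ≤ R + (D - t) := by
    calc dist x0 h ≤ dist x0 (γ t) + dist (γ t) h := dist_triangle _ _ _
    _ = R + (D - t) := by rw [hfeq, hth]
  have h3 : t ≤ D - dist x0 h + R := by linarith
  have : infDist x (sphere x0 R) - R ≤ D - dist x0 h := by linarith
  calc infDist x (sphere x0 R) - R ≤ D - dist x0 h := this
  _ ≤ D - R := by linarith
  _ ≤ (infDist x H + ε) - R := by linarith
  _ = (infDist x H - R) + ε := by ring

/-- the point-assigned dl-function `u_{x0}` is minimal among all
dl-functions vanishing at `x0`. -/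
theorem stmt2 {X : Type*} [MetricSpace X] [Nonempty X] [ProperSpace X] [NoncompactSpace X]
    (hgeo : IsGeodesicSpace X)
    (u : X → X → ℝ)
    (hu : ∀ x0 x : X,
      Tendsto (fun r : ℝ => infDist x (sphere x0 r) - r) atTop (nhds (u x0 x)))
    (x0 : X) (v : X → ℝ) (hv : IsDLFunction v) (hv0 : v x0 = 0) :
    ∀ x : X, u x0 x ≤ v x := by
  intro x
  obtain ⟨H, c, hne, hcl, ⟨z0, hz⟩, hlim⟩ := hv
  set R : ℕ → ℝ := fun n => infDist x0 (H n) with hRdef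
  -- R n → ∞
  have hR : Tendsto R atTop atTop := by
    apply tendsto_atTop_mono (f := fun n => infDist z0 (H n) - dist z0 x0)
    · intro n
      have := infDist_le_infDist_add_dist (x := z0) (y := x0) (s := H n)
      simp only [hRdef]
      linarith
    · exact tendsto_atTop_add_const_right _ _ hz
  -- the composed limit
  have hA : Tendsto (fun n => infDist x (sphere x0 (R n)) - R n) atTop (nhds (u x0 x)) :=
    (hu x0 x).comp hR
  -- g n → v x
  have hB : Tendsto (fun n => infDist x (H n) - R n) atTop (nhds (v x)) := by
    have := (hlim x).sub (hlim x0)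
    rw [hv0, sub_zero] at this
    convert this using 2 with n
    simp only [hRdef]
    ring
  refine le_of_forall_pos_le_add ?_
  intro ε hε
  have hB' : Tendsto (fun n => (infDist x (H n) - R n) + ε) atTop (nhds (v x + ε)) :=
    hB.add_const ε
  refine le_of_tendsto_of_tendsto hA hB' ?_
  filter_upwards [hR.eventually_ge_atTop (dist x0 x)] with n hn
  exact key_est hgeo x0 x (H n) (hne n) ε hε hn
end

section
/- Let X be a nonempty proper, noncompact geodesic metric space. For any three points x, y, z ∈ X, the anti-triangle inequality u_x(y) + u_y(z) ≤ u_x(z) holds, where u_x and u_y are the point-assigned dl-functions based at x and y respectively. -/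
open Metric Filter

/-- the anti-triangle inequality `u_x(y) + u_y(z) ≤ u_x(z)` for
point-assigned dl-functions. -/
theorem stmt3 {X : Type*} [MetricSpace X] [Nonempty X] [ProperSpace X] [NoncompactSpace X]
    (hgeo : IsGeodesicSpace X)
    (u : X → X → ℝ)
    (hu : ∀ x0 x : X,
      Tendsto (fun r : ℝ => infDist x (sphere x0 r) - r) atTop (nhds (u x0 x))) :
    ∀ x y z : X, u x y + u y z ≤ u x z := by
  classical
  intro x y z
  -- spheres of nonnegative radius are nonempty
  have hsph : ∀ (x0 : X) (r : ℝ), 0 ≤ r → (sphere x0 r).Nonempty := by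
    intro x0 r hr
    obtain ⟨p, hp⟩ : ∃ p : X, r ≤ dist x0 p := by
      by_contra h
      push_neg at h
      have hsub : (Set.univ : Set X) ⊆ closedBall x0 r := fun p _ => by
        simpa [mem_closedBall, dist_comm] using (h p).le
      exact noncompact_univ X
        ((isCompact_closedBall x0 r).of_isClosed_subset isClosed_univ hsub)
    obtain ⟨γ, h0, hd, hiso⟩ := hgeo x0 p
    refine ⟨γ r, ?_⟩
    have : dist (γ r) (γ 0) = |r - 0| :=
      hiso r ⟨hr, hp⟩ 0 ⟨le_refl 0, dist_nonneg⟩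
    rw [mem_sphere, ← h0, this, sub_zero, abs_of_nonneg hr]
  -- nearest point on sphere x r to z
  have exw : ∀ r : ℝ, 0 ≤ r →
      ∃ w ∈ sphere x r, infDist z (sphere x r) = dist z w := fun r hr =>
    (isCompact_sphere x r).exists_infDist_eq_dist (hsph x r hr) z
  let w : ℝ → X := fun r => if hr : 0 ≤ r then (exw r hr).choose else Classical.arbitrary X
  have hwmem : ∀ r : ℝ, (hr : 0 ≤ r) → w r ∈ sphere x r := by
    intro r hr
    simp only [w, dif_pos hr]
    exact (exw r hr).choose_spec.1
  have hwdist : ∀ r : ℝ, (hr : 0 ≤ r) → infDist z (sphere x r) = dist z (w r) := by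
    intro r hr
    simp only [w, dif_pos hr]
    exact (exw r hr).choose_spec.2
  set s : ℝ → ℝ := fun r => dist y (w r) with hs
  -- s tends to infinity
  have hs_top : Tendsto s atTop atTop := by
    apply tendsto_atTop_mono' atTop (f₁ := fun r => r - dist x y)
    · filter_upwards [eventually_ge_atTop (0 : ℝ)] with r hr
      have h1 : dist x (w r) = r := by
        have := hwmem r hr
        rw [mem_sphere] at this
        rw [dist_comm]; exact this
      have h2 : dist x (w r) ≤ dist x y + dist y (w r) := dist_triangle x y (w r)
      simp only [s]
      linarith
    · simpa [sub_eq_add_neg] using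
        tendsto_atTop_add_const_right atTop (-(dist x y)) (tendsto_id (α := ℝ))
  -- the pointwise inequality, eventually
  have hev : ∀ᶠ r in atTop,
      (infDist z (sphere y (s r)) - s r) + (infDist y (sphere x r) - r) ≤
        infDist z (sphere x r) - r := by
    filter_upwards [eventually_ge_atTop (0 : ℝ)] with r hr
    have hwy : w r ∈ sphere y (s r) := by rw [mem_sphere, dist_comm]
    have h1 : infDist z (sphere y (s r)) ≤ dist z (w r) := infDist_le_dist_of_mem hwy
    have h2 : infDist y (sphere x r) ≤ s r := infDist_le_dist_of_mem (hwmem r hr)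
    have h3 := hwdist r hr
    linarith
  have T1 : Tendsto (fun r => (infDist z (sphere y (s r)) - s r) +
      (infDist y (sphere x r) - r)) atTop (nhds (u y z + u x y)) :=
    ((hu y z).comp hs_top).add (hu x y)
  have := le_of_tendsto_of_tendsto T1 (hu x z) hev
  linarith
end

section
/- Let X be a nonempty proper, noncompact geodesic metric space and define ρ(x,y) = −(u_x(y) + u_y(x))/2 for x, y ∈ X. Then ρ is a pseudo-metric on X bounded above by d: for all x, y, z ∈ X, (a) ρ(x,y) ≥ 0; (b) ρ(x,x) = 0; (c) ρ(x,y) = ρ(y,x); (d) ρ(x,z) ≤ ρ(x,y) + ρ(y,z); and (e) ρ(x,y) ≤ d(x,y). -/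
open Metric Filter

lemma le_infDist_aux {X : Type*} [MetricSpace X] {s : Set X} {x : X} {b : ℝ}
    (hs : s.Nonempty) (h : ∀ y ∈ s, b ≤ dist x y) : b ≤ infDist x s := by
  by_contra hc
  push_neg at hc
  obtain ⟨y, hy, hlt⟩ := (infDist_lt_iff hs).1 hc
  exact absurd (h y hy) (not_le.2 hlt)

lemma sphere_nonempty_aux {X : Type*} [MetricSpace X] [ProperSpace X] [NoncompactSpace X]
    (hgeo : IsGeodesicSpace X) (c : X) {r : ℝ} (hr : 0 ≤ r) :
    (sphere c r).Nonempty := by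
  obtain ⟨q, hq⟩ : ∃ q : X, r < dist c q := by
    by_contra h
    push_neg at h
    have hcomp : IsCompact (Set.univ : Set X) :=
      (isCompact_closedBall c r).of_isClosed_subset isClosed_univ
        (fun q _ => by simpa [Metric.mem_closedBall, dist_comm] using h q)
    exact noncompact_univ X hcomp
  obtain ⟨γ, hγ0, hγ1, hiso⟩ := hgeo c q
  refine ⟨γ r, ?_⟩
  have h0 : (0 : ℝ) ∈ Set.Icc (0:ℝ) (dist c q) := ⟨le_refl _, dist_nonneg⟩
  have hrm : r ∈ Set.Icc (0:ℝ) (dist c q) := ⟨hr, hq.le⟩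
  have h := hiso r hrm 0 h0
  rw [hγ0] at h
  rw [mem_sphere, h]
  simp [abs_of_nonneg hr]

/-- Monotonicity of `r ↦ infDist p (sphere c r) - r`. -/
lemma infDist_sphere_mono {X : Type*} [MetricSpace X] [ProperSpace X] [NoncompactSpace X]
    (hgeo : IsGeodesicSpace X) (c p : X) {r r' : ℝ}
    (hcp : dist c p ≤ r) (hrr : r ≤ r') :
    infDist p (sphere c r) - r ≤ infDist p (sphere c r') - r' := by
  have h0r : 0 ≤ r := dist_nonneg.trans hcp
  obtain ⟨w, hw, hdw⟩ := (isCompact_sphere c r').exists_infDist_eq_dist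
    (sphere_nonempty_aux hgeo c (h0r.trans hrr)) p
  obtain ⟨γ, hγ0, hγ1, hiso⟩ := hgeo p w
  set D := dist p w with hD
  have hD0 : 0 ≤ D := dist_nonneg
  have hcont : ContinuousOn (fun s => dist c (γ s)) (Set.Icc 0 D) := by
    have : LipschitzOnWith 1 (fun s => dist c (γ s)) (Set.Icc 0 D) := by
      rw [lipschitzOnWith_iff_dist_le_mul]
      intro a ha b hb
      have h1 : dist (dist c (γ a)) (dist c (γ b)) ≤ dist (γ a) (γ b) := by
        rw [Real.dist_eq]
        calc |dist c (γ a) - dist c (γ b)| = |dist (γ a) c - dist (γ b) c| := by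
              rw [dist_comm c (γ a), dist_comm c (γ b)]
          _ ≤ dist (γ a) (γ b) := abs_dist_sub_le _ _ _
      rw [hiso a ha b hb] at h1
      simpa [Real.dist_eq] using h1
    exact this.continuousOn
  have hmem : r ∈ Set.Icc (dist c (γ 0)) (dist c (γ D)) := by
    rw [hγ0, hγ1]
    refine ⟨hcp, ?_⟩
    rw [mem_sphere] at hw
    rw [dist_comm]
    exact hrr.trans hw.ge
  obtain ⟨t, ht, hft0⟩ := intermediate_value_Icc hD0 hcont hmem
  have hft : dist c (γ t) = r := hft0
  have htmem : γ t ∈ sphere c r := by rw [mem_sphere, dist_comm]; exact hft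
  have hpt : dist p (γ t) = t := by
    have := hiso 0 ⟨le_refl _, hD0⟩ t ht
    rw [hγ0] at this
    rw [this, abs_of_nonpos (by linarith [ht.1])]
    ring
  have htw : dist (γ t) w = D - t := by
    have := hiso t ht D ⟨hD0, le_refl _⟩
    rw [hγ1] at this
    rw [this, abs_of_nonpos (by linarith [ht.2])]
    ring
  have hlow : r' - r ≤ D - t := by
    have h1 : dist c w ≤ dist c (γ t) + dist (γ t) w := dist_triangle _ _ _
    rw [mem_sphere] at hw
    rw [dist_comm w c] at hw
    rw [hw, hft, htw] at h1
    linarith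
  have h2 : infDist p (sphere c r) ≤ t := by
    calc infDist p (sphere c r) ≤ dist p (γ t) := infDist_le_dist_of_mem htmem
      _ = t := hpt
  have : infDist p (sphere c r') = D := hdw
  linarith

/-- Superadditivity: `u x y + u y z ≤ u x z`. -/
lemma u_superadd {X : Type*} [MetricSpace X] [ProperSpace X] [NoncompactSpace X]
    (hgeo : IsGeodesicSpace X) (u : X → X → ℝ)
    (hu : ∀ x0 x : X,
      Tendsto (fun r : ℝ => infDist x (sphere x0 r) - r) atTop (nhds (u x0 x)))
    (x y z : X) : u x y + u y z ≤ u x z := by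
  have key : ∀ r : ℝ, dist x y + dist y z ≤ r →
      (infDist y (sphere x r) - r) + (infDist z (sphere y (r - dist x y)) - (r - dist x y))
        ≤ infDist z (sphere x r) - r := by
    intro r hr
    have h0r : 0 ≤ r := le_trans (by positivity) hr
    obtain ⟨w, hw, hdw⟩ := (isCompact_sphere x r).exists_infDist_eq_dist
      (sphere_nonempty_aux hgeo x h0r) z
    set R := dist y w with hR
    have hwx : dist w x = r := mem_sphere.1 hw
    have hRlow : r - dist x y ≤ R := by
      have h1 := dist_triangle w y x
      rw [hwx] at h1
      have h2 : dist w y = dist y w := dist_comm w y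
      have h3 : dist y x = dist x y := dist_comm y x
      rw [hR]; linarith
    have hyz : dist y z ≤ r - dist x y := by linarith
    have hmono : infDist z (sphere y (r - dist x y)) - (r - dist x y)
        ≤ infDist z (sphere y R) - R := infDist_sphere_mono hgeo y z hyz hRlow
    have hwsy : w ∈ sphere y R := by rw [mem_sphere, dist_comm]
    have h1 : infDist z (sphere y R) ≤ dist z w := infDist_le_dist_of_mem hwsy
    have h2 : infDist y (sphere x r) ≤ R := by
      rw [hR]; exact infDist_le_dist_of_mem hw
    linarith [hdw.ge, hdw.le]
  -- pass to the limit
  have hlim1 : Tendsto (fun r : ℝ =>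
      (infDist y (sphere x r) - r) + (infDist z (sphere y (r - dist x y)) - (r - dist x y)))
      atTop (nhds (u x y + u y z)) := by
    refine (hu x y).add ?_
    have hcomp : Tendsto (fun r : ℝ => r - dist x y) atTop atTop :=
      tendsto_atTop_add_const_right atTop (-(dist x y)) tendsto_id
    exact (hu y z).comp hcomp
  exact le_of_tendsto_of_tendsto hlim1 (hu x z)
    (eventually_atTop.2 ⟨dist x y + dist y z, fun r hr => key r hr⟩)

lemma u_self {X : Type*} [MetricSpace X] [ProperSpace X] [NoncompactSpace X]
    (hgeo : IsGeodesicSpace X) (u : X → X → ℝ)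
    (hu : ∀ x0 x : X,
      Tendsto (fun r : ℝ => infDist x (sphere x0 r) - r) atTop (nhds (u x0 x)))
    (x : X) : u x x = 0 := by
  have hzero : ∀ r : ℝ, 0 ≤ r → infDist x (sphere x r) - r = 0 := by
    intro r hr
    have hne := sphere_nonempty_aux hgeo x hr
    have h1 : infDist x (sphere x r) ≤ r := by
      obtain ⟨w, hw⟩ := hne
      have := infDist_le_dist_of_mem (x := x) hw
      rwa [dist_comm, mem_sphere.1 hw] at this
    have h2 : r ≤ infDist x (sphere x r) :=
      le_infDist_aux hne fun w hw => by rw [dist_comm, mem_sphere.1 hw]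
    linarith
  have : Tendsto (fun r : ℝ => infDist x (sphere x r) - r) atTop (nhds 0) := by
    refine Tendsto.congr' ?_ tendsto_const_nhds
    filter_upwards [eventually_ge_atTop (0:ℝ)] with r hr
    exact (hzero r hr).symm
  exact tendsto_nhds_unique (hu x x) this

lemma u_lower {X : Type*} [MetricSpace X] [ProperSpace X] [NoncompactSpace X]
    (hgeo : IsGeodesicSpace X) (u : X → X → ℝ)
    (hu : ∀ x0 x : X,
      Tendsto (fun r : ℝ => infDist x (sphere x0 r) - r) atTop (nhds (u x0 x)))
    (x y : X) : -dist x y ≤ u x y := by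
  refine ge_of_tendsto (hu x y) ?_
  filter_upwards [eventually_ge_atTop (0:ℝ)] with r hr
  have hne := sphere_nonempty_aux hgeo x hr
  have : r - dist x y ≤ infDist y (sphere x r) := by
    refine le_infDist_aux hne fun w hw => ?_
    have h1 : dist w x ≤ dist w y + dist y x := dist_triangle _ _ _
    rw [mem_sphere.1 hw] at h1
    have h2 : dist w y = dist y w := dist_comm w y
    have h3 : dist y x = dist x y := dist_comm y x
    linarith
  linarith

/-- `ρ(x,y) = −(u_x(y)+u_y(x))/2` is a pseudo-metric bounded above
by the distance `d`. -/
theorem stmt4 {X : Type*} [MetricSpace X] [Nonempty X] [ProperSpace X] [NoncompactSpace X]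
    (hgeo : IsGeodesicSpace X)
    (u : X → X → ℝ)
    (hu : ∀ x0 x : X,
      Tendsto (fun r : ℝ => infDist x (sphere x0 r) - r) atTop (nhds (u x0 x)))
    (ρ : X → X → ℝ) (hρ : ∀ x y : X, ρ x y = -(u x y + u y x) / 2) :
    ∀ x y z : X,
      0 ≤ ρ x y ∧
      ρ x x = 0 ∧
      ρ x y = ρ y x ∧
      ρ x z ≤ ρ x y + ρ y z ∧
      ρ x y ≤ dist x y := by
  intro x y z
  have hself := u_self hgeo u hu
  have hsuper := u_superadd hgeo u hu
  have hlower := u_lower hgeo u hu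
  refine ⟨?_, ?_, ?_, ?_, ?_⟩
  · have h1 : u x y + u y x ≤ u x x := hsuper x y x
    rw [hρ, hself x] at *
    linarith
  · rw [hρ, hself x]; ring
  · rw [hρ, hρ]; ring
  · rw [hρ, hρ, hρ]
    have h1 : u x y + u y z ≤ u x z := hsuper x y z
    have h2 : u z y + u y x ≤ u z x := hsuper z y x
    linarith
  · rw [hρ]
    have h1 := hlower x y
    have h2 := hlower y x
    rw [dist_comm y x] at h2
    linarith
end

section
/- Let X be a nonempty proper, noncompact geodesic metric space and define ρ(x,y) = −(u_x(y) + u_y(x))/2. For any x, y ∈ X, the following are equivalent: (i) ρ(x,y) = 0; (ii) there exists a constant c ∈ ℝ such that u_x(z) = u_y(z) + c for all z ∈ X. -/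
open Metric Filter

section Aux

variable {X : Type*} [MetricSpace X] [Nonempty X] [ProperSpace X] [NoncompactSpace X]

lemma aux_sphere_nonempty (hgeo : IsGeodesicSpace X) (x : X) {r : ℝ} (hr : 0 ≤ r) :
    (sphere x r).Nonempty := by
  obtain ⟨w, hw⟩ : ∃ w : X, r ≤ dist x w := by
    by_contra h
    push_neg at h
    have hb : Bornology.IsBounded (Set.univ : Set X) :=
      (Metric.isBounded_iff_subset_closedBall x).2
        ⟨r, fun w _ => by simpa [Metric.mem_closedBall, dist_comm] using (h w).le⟩
    exact (not_compactSpace_iff.2 ‹NoncompactSpace X›)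
      (Metric.compactSpace_iff_isBounded_univ.2 hb)
  obtain ⟨γ, hγ0, hγd, hiso⟩ := hgeo x w
  refine ⟨γ r, ?_⟩
  have h0 : (0 : ℝ) ∈ Set.Icc (0 : ℝ) (dist x w) := ⟨le_refl _, dist_nonneg⟩
  have hrI : r ∈ Set.Icc (0 : ℝ) (dist x w) := ⟨hr, hw⟩
  have := hiso r hrI 0 h0
  rw [hγ0] at this
  simp only [mem_sphere]
  rw [this]
  rw [abs_of_nonneg (by linarith)]
  ring

lemma aux_u_self (hgeo : IsGeodesicSpace X) (u : X → X → ℝ)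
    (hu : ∀ x0 x : X,
      Tendsto (fun r : ℝ => infDist x (sphere x0 r) - r) atTop (nhds (u x0 x)))
    (x : X) : u x x = 0 := by
  have h0 : Tendsto (fun r : ℝ => infDist x (sphere x r) - r) atTop (nhds 0) := by
    apply Tendsto.congr' _ tendsto_const_nhds
    filter_upwards [eventually_ge_atTop (0 : ℝ)] with r hr
    obtain ⟨p, hp⟩ := aux_sphere_nonempty hgeo x hr
    have h1 : infDist x (sphere x r) = r := by
      refine le_antisymm ?_ ?_
      · have := infDist_le_dist_of_mem (x := x) hp
        rwa [dist_comm, mem_sphere.1 hp] at this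
      · by_contra hlt
        push_neg at hlt
        obtain ⟨q, hq, hq2⟩ := (infDist_lt_iff ⟨p, hp⟩).1 hlt
        rw [dist_comm, mem_sphere.1 hq] at hq2
        exact lt_irrefl r hq2
    rw [h1]; ring
  exact tendsto_nhds_unique h0 (hu x x) |>.symm

/-- Key inequality: `u y z + u x y ≤ u x z`. -/
lemma aux_key (hgeo : IsGeodesicSpace X) (u : X → X → ℝ)
    (hu : ∀ x0 x : X,
      Tendsto (fun r : ℝ => infDist x (sphere x0 r) - r) atTop (nhds (u x0 x)))
    (x y z : X) : u y z + u x y ≤ u x z := by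
  classical
  -- nearest point on sphere x r to z
  have hex : ∀ r : ℝ, 0 ≤ r → ∃ p ∈ sphere x r, infDist z (sphere x r) = dist z p :=
    fun r hr => (isClosed_sphere).exists_infDist_eq_dist (aux_sphere_nonempty hgeo x hr) z
  set p : ℝ → X := fun r => if h : 0 ≤ r then (hex r h).choose else z with hp
  have hpmem : ∀ r : ℝ, 0 ≤ r → p r ∈ sphere x r := by
    intro r hr; rw [hp]; simp only [dif_pos hr]; exact (hex r hr).choose_spec.1
  have hpdist : ∀ r : ℝ, 0 ≤ r → infDist z (sphere x r) = dist z (p r) := by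
    intro r hr; rw [hp]; simp only [dif_pos hr]; exact (hex r hr).choose_spec.2
  set s : ℝ → ℝ := fun r => dist y (p r) with hs
  have hsge : ∀ᶠ r in atTop, r - dist x y ≤ s r := by
    filter_upwards [eventually_ge_atTop (0 : ℝ)] with r hr
    have h1 : dist x (p r) = r := by
      have := mem_sphere.1 (hpmem r hr); rwa [dist_comm] at this
    have := dist_triangle x y (p r)
    rw [h1] at this
    simp only [hs]; linarith
  have hstop : Tendsto s atTop atTop :=
    tendsto_atTop_mono' _ hsge (tendsto_atTop_add_const_right _ _ tendsto_id)
  have h1 : Tendsto (fun r => infDist z (sphere y (s r)) - s r) atTop (nhds (u y z)) :=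
    (hu y z).comp hstop
  have h2 : Tendsto (fun r => infDist y (sphere x r) - r) atTop (nhds (u x y)) := hu x y
  have h3 : Tendsto (fun r => infDist z (sphere x r) - r) atTop (nhds (u x z)) := hu x z
  refine le_of_tendsto_of_tendsto (h1.add h2) h3 ?_
  filter_upwards [eventually_ge_atTop (0 : ℝ)] with r hr
  have hmem : p r ∈ sphere y (s r) := by simp [hs, dist_comm]
  have hA : infDist z (sphere y (s r)) ≤ dist z (p r) := infDist_le_dist_of_mem (x := z) hmem
  have hB : infDist y (sphere x r) ≤ s r := by
    have := infDist_le_dist_of_mem (x := y) (hpmem r hr); simpa [hs] using this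
  have hC : infDist z (sphere x r) = dist z (p r) := hpdist r hr
  show infDist z (sphere y (s r)) - s r + (infDist y (sphere x r) - r) ≤ infDist z (sphere x r) - r
  rw [hC]
  linarith

end Aux

/-- `ρ(x,y) = 0` iff the point-assigned dl-functions `u_x` and `u_y`
differ by a constant. -/
theorem stmt5 {X : Type*} [MetricSpace X] [Nonempty X] [ProperSpace X] [NoncompactSpace X]
    (hgeo : IsGeodesicSpace X)
    (u : X → X → ℝ)
    (hu : ∀ x0 x : X,
      Tendsto (fun r : ℝ => infDist x (sphere x0 r) - r) atTop (nhds (u x0 x)))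
    (x y : X) :
    -(u x y + u y x) / 2 = 0 ↔ ∃ c : ℝ, ∀ z : X, u x z = u y z + c := by
  constructor
  · intro h
    have hρ : u x y + u y x = 0 := by linarith
    refine ⟨u x y, fun z => ?_⟩
    have h1 := aux_key hgeo u hu x y z
    have h2 := aux_key hgeo u hu y x z
    linarith
  · rintro ⟨c, hc⟩
    have hx := hc x
    have hy := hc y
    rw [aux_u_self hgeo u hu x] at hx
    rw [aux_u_self hgeo u hu y] at hy
    linarith
end

section
/- Let X be a nonempty proper, noncompact geodesic metric space and let u : X → ℝ be a dl-function with witnessing data: nonempty closed sets H_n ⊆ X, reals c_n, d(z0, H_n) → ∞ for some z0, and u(x) = lim_{n→∞}[d(x, H_n) − c_n] for all x. Let x ∈ X, let x_n → x, set r_n = d(x_n, H_n), and let γ_n : [0, r_n] → X be unit-speed minimal geodesic segments with γ_n(0) = x_n, d(γ_n(s), γ_n(t)) = |s − t| for s,t ∈ [0, r_n], and γ_n(r_n) ∈ H_n (so γ_n(r_n) is a foot of x_n on H_n). Suppose r_n → ∞ and γ_n converges pointwise (equivalently, uniformly on compact intervals) to a map γ : [0,∞) → X. Then for all 0 ≤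 t1 ≤ t2, u(γ(t2)) − u(γ(t1)) = t1 − t2. -/
open Metric Filter

/-- a co-ray `γ` to a dl-function `u`, obtained as a limit of
minimal geodesic segments to feet on the sets `H_n`, is a gradient line of `u`:
`u(γ(t2)) − u(γ(t1)) = t1 − t2` for `0 ≤ t1 ≤ t2`. -/
theorem stmt10 {X : Type*} [MetricSpace X] [Nonempty X] [ProperSpace X] [NoncompactSpace X]
    (hgeo : IsGeodesicSpace X)
    (u : X → ℝ) (H : ℕ → Set X) (c : ℕ → ℝ)
    (hne : ∀ n, (H n).Nonempty) (hcl : ∀ n, IsClosed (H n))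
    (z0 : X) (hdiv : Tendsto (fun n => infDist z0 (H n)) atTop atTop)
    (hu : ∀ x : X, Tendsto (fun n => infDist x (H n) - c n) atTop (nhds (u x)))
    (x : X) (xs : ℕ → X) (hxs : Tendsto xs atTop (nhds x))
    (γn : ℕ → ℝ → X)
    (hγ0 : ∀ n, γn n 0 = xs n)
    (hseg : ∀ n, ∀ s ∈ Set.Icc (0 : ℝ) (infDist (xs n) (H n)),
      ∀ t ∈ Set.Icc (0 : ℝ) (infDist (xs n) (H n)),
        dist (γn n s) (γn n t) = |s - t|)
    (hfoot : ∀ n, γn n (infDist (xs n) (H n)) ∈ H n)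
    (hrn : Tendsto (fun n => infDist (xs n) (H n)) atTop atTop)
    (γ : ℝ → X)
    (hconv : ∀ t : ℝ, 0 ≤ t → Tendsto (fun n => γn n t) atTop (nhds (γ t))) :
    ∀ t1 t2 : ℝ, 0 ≤ t1 → t1 ≤ t2 → u (γ t2) - u (γ t1) = t1 - t2 := by
  -- Key claim: for every `t ≥ 0`, `infDist (xs n) (H n) - c n - t → u (γ t)`.
  have key : ∀ t : ℝ, 0 ≤ t →
      Tendsto (fun n => infDist (xs n) (H n) - c n - t) atTop (nhds (u (γ t))) := by
    intro t ht
    have h1 := hu (γ t)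
    have h2 : Tendsto (fun n => infDist (γn n t) (H n) - infDist (γ t) (H n))
        atTop (nhds 0) := by
      refine squeeze_zero_norm (a := fun n => dist (γn n t) (γ t)) (fun n => ?_) ?_
      ·
        rw [Real.norm_eq_abs, abs_sub_le_iff]
        constructor
        · have := infDist_le_infDist_add_dist (x := γn n t) (y := γ t) (s := H n)
          linarith
        · have := infDist_le_infDist_add_dist (x := γ t) (y := γn n t) (s := H n)
          rw [dist_comm] at this
          linarith
      · simpa using tendsto_iff_dist_tendsto_zero.mp (hconv t ht)
    have h3 : Tendsto (fun n => infDist (γn n t) (H n) - c n) atTop (nhds (u (γ t))) := by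
      have := h2.add h1
      simpa using this.congr (fun n => by ring)
    -- eventually `infDist (γn n t) (H n) = infDist (xs n) (H n) - t`
    have hev : ∀ᶠ n in atTop, infDist (γn n t) (H n) = infDist (xs n) (H n) - t := by
      filter_upwards [hrn.eventually_ge_atTop t] with n hn
      set r := infDist (xs n) (H n) with hr
      have h0r : (0:ℝ) ≤ r := infDist_nonneg
      have htmem : t ∈ Set.Icc (0:ℝ) r := ⟨ht, hn⟩
      have hrmem : r ∈ Set.Icc (0:ℝ) r := ⟨h0r, le_refl r⟩
      have h0mem : (0:ℝ) ∈ Set.Icc (0:ℝ) r := ⟨le_refl 0, h0r⟩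
      have hle : infDist (γn n t) (H n) ≤ r - t := by
        have := infDist_le_dist_of_mem (x := γn n t) (hfoot n)
        rw [hseg n t htmem r hrmem] at this
        calc infDist (γn n t) (H n) ≤ |t - r| := this
          _ = r - t := by rw [abs_sub_comm, abs_of_nonneg (by linarith)]
      have hge : r - t ≤ infDist (γn n t) (H n) := by
        have hd : dist (xs n) (γn n t) = t := by
          have := hseg n 0 h0mem t htmem
          rw [hγ0 n] at this
          simpa [abs_of_nonneg ht, abs_sub_comm] using this
        have h5 := infDist_le_infDist_add_dist (x := xs n) (y := γn n t) (s := H n)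
        rw [hd] at h5
        linarith
      linarith
    exact h3.congr' (by filter_upwards [hev] with n hn; rw [hn]; ring)
  intro t1 t2 ht1 h12
  have ht2 : (0:ℝ) ≤ t2 := le_trans ht1 h12
  have k1 := (key t1 ht1).add_const t1
  have k2 := (key t2 ht2).add_const t2
  have : u (γ t1) + t1 = u (γ t2) + t2 := by
    have k1' : Tendsto (fun k => infDist (xs k) (H k) - c k) atTop (nhds (u (γ t1) + t1)) :=
      k1.congr fun n => by ring
    have k2' : Tendsto (fun k => infDist (xs k) (H k) - c k) atTop (nhds (u (γ t2) + t2)) :=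
      k2.congr fun n => by ring
    exact tendsto_nhds_unique k1' k2'
  linarith
end

section
/- Let X be a nonempty proper, noncompact geodesic metric space and let u : X → ℝ be a dl-function. Then for every x ∈ X there exists a geodesic ray γ : [0,∞) → X calibrated by u and starting at x; that is, γ(0) = x, d(γ(s), γ(t)) = |s − t| for all s, t ≥ 0, and u(γ(t)) = u(x) − t for all t ≥ 0. -/
open Metric Filter

/-- from every point there is a geodesic ray calibrated by a given
dl-function `u`, i.e. a co-ray to `u`. -/
theorem stmt11 {X : Type*} [MetricSpace X] [Nonempty X] [ProperSpace X] [NoncompactSpace X]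
    (hgeo : IsGeodesicSpace X)
    (u : X → ℝ) (hdl : IsDLFunction u) :
    ∀ x : X, ∃ γ : ℝ → X, γ 0 = x ∧
      (∀ s t : ℝ, 0 ≤ s → 0 ≤ t → dist (γ s) (γ t) = |s - t|) ∧
      ∀ t : ℝ, 0 ≤ t → u (γ t) = u x - t := by
  obtain ⟨H, c, hne, hcl, ⟨z0, hz0⟩, hu⟩ := hdl
  set f : ℕ → X → ℝ := fun n y => infDist y (H n) - c n with hf
  -- f n is 1-Lipschitz
  have hflip : ∀ n (a b : X), |f n a - f n b| ≤ dist a b := by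
    intro n a b
    have h1 := infDist_le_infDist_add_dist (x := a) (y := b) (s := H n)
    have h2 := infDist_le_infDist_add_dist (x := b) (y := a) (s := H n)
    rw [dist_comm b a] at h2
    simp only [hf]
    rw [abs_sub_le_iff]
    exact ⟨by linarith, by linarith⟩
  -- u is 1-Lipschitz
  have hulip : ∀ a b : X, |u a - u b| ≤ dist a b := by
    intro a b
    have ht : Tendsto (fun n => |f n a - f n b|) atTop (nhds |u a - u b|) :=
      ((hu a).sub (hu b)).abs
    exact le_of_tendsto ht (Eventually.of_forall fun n => hflip n a b)
  have hucont : Continuous u := by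
    refine (LipschitzWith.of_dist_le_mul (K := 1) fun a b => ?_).continuous
    rw [Real.dist_eq]
    simpa using hulip a b
  intro x
  set d : ℕ → ℝ := fun n => infDist x (H n) with hdd
  have hd0 : ∀ n, 0 ≤ d n := fun n => infDist_nonneg
  have hdtop : Tendsto d atTop atTop := by
    refine tendsto_atTop_mono (fun n => ?_)
      (tendsto_atTop_add_const_right atTop (-dist z0 x) hz0)
    have := infDist_le_infDist_add_dist (x := z0) (y := x) (s := H n)
    simp only [hdd]; linarith
  -- nearest points and geodesics
  have hq : ∀ n, ∃ q ∈ H n, d n = dist x q := fun n =>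
    (hcl n).exists_infDist_eq_dist (hne n) x
  choose q hqmem hqd using hq
  have hgeo' : ∀ n, ∃ γ : ℝ → X, γ 0 = x ∧ γ (d n) = q n ∧
      ∀ s ∈ Set.Icc (0 : ℝ) (d n), ∀ t ∈ Set.Icc (0 : ℝ) (d n),
        dist (γ s) (γ t) = |s - t| := by
    intro n
    obtain ⟨γ, h0, h1, h2⟩ := hgeo x (q n)
    rw [← hqd n] at h1 h2
    exact ⟨γ, h0, h1, h2⟩
  choose geo hgeo0 hgeoq hgeod using hgeo'
  -- clamped geodesics
  set g : ℕ → ℝ → X := fun n t => geo n (min (max t 0) (d n)) with hg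
  have hclmem : ∀ n (t : ℝ), min (max t 0) (d n) ∈ Set.Icc (0 : ℝ) (d n) := by
    intro n t
    exact ⟨le_min (le_max_right t 0) (hd0 n), min_le_right _ _⟩
  have hcleq : ∀ n (t : ℝ), 0 ≤ t → t ≤ d n → min (max t 0) (d n) = t := by
    intro n t h0 h1
    rw [max_eq_left h0, min_eq_left h1]
  have hg0 : ∀ n, g n 0 = x := by
    intro n
    simp only [hg, hcleq n 0 le_rfl (hd0 n)]
    exact hgeo0 n
  have hgdist : ∀ n (s t : ℝ), 0 ≤ s → 0 ≤ t → s ≤ d n → t ≤ d n →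
      dist (g n s) (g n t) = |s - t| := by
    intro n s t hs ht hs' ht'
    simp only [hg, hcleq n s hs hs', hcleq n t ht ht']
    exact hgeod n s ⟨hs, hs'⟩ t ⟨ht, ht'⟩
  have hgball : ∀ n (t : ℝ), g n t ∈ closedBall x |t| := by
    intro n t
    rw [mem_closedBall]
    have h0 : (0 : ℝ) ∈ Set.Icc (0 : ℝ) (d n) := ⟨le_rfl, hd0 n⟩
    have := hgeod n _ (hclmem n t) 0 h0
    rw [hgeo0 n] at this
    simp only [hg]
    rw [this, sub_zero, abs_of_nonneg (hclmem n t).1]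
    calc min (max t 0) (d n) ≤ max t 0 := min_le_left _ _
      _ ≤ |t| := max_le (le_abs_self t) (abs_nonneg t)
  -- calibration along each geodesic
  have hcal : ∀ n (t : ℝ), 0 ≤ t → t ≤ d n → f n (g n t) = f n x - t := by
    intro n t h0 h1
    have hct := hcleq n t h0 h1
    have hinf : infDist (g n t) (H n) = d n - t := by
      have hle : infDist (g n t) (H n) ≤ d n - t := by
        have h2 : dist (g n t) (q n) = |t - d n| := by
          simp only [hg, hct]
          have := hgeod n t ⟨h0, h1⟩ (d n) ⟨hd0 n, le_rfl⟩
          rw [hgeoq n] at this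
          exact this
        have := infDist_le_dist_of_mem (x := g n t) (hqmem n)
        rw [h2, abs_of_nonpos (by linarith)] at this
        linarith
      have hge : d n - t ≤ infDist (g n t) (H n) := by
        have h3 : dist x (g n t) = t := by
          simp only [hg, hct]
          have h0' : (0 : ℝ) ∈ Set.Icc (0 : ℝ) (d n) := ⟨le_rfl, hd0 n⟩
          have := hgeod n 0 h0' t ⟨h0, h1⟩
          rw [hgeo0 n] at this
          rw [this, zero_sub, abs_neg, abs_of_nonneg h0]
        have := infDist_le_infDist_add_dist (x := x) (y := g n t) (s := H n)
        rw [dist_comm x (g n t), dist_comm (g n t) x] at *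
        simp only [hdd] at *
        nlinarith [this, h3]
      linarith
    simp only [hf, hinf, hdd]
    ring
  -- ultrafilter limit
  set U : Ultrafilter ℕ := Ultrafilter.of atTop with hUdef
  have hU : (U : Filter ℕ) ≤ atTop := Ultrafilter.of_le atTop
  have hEv : ∀ t : ℝ, ∀ᶠ n in (U : Filter ℕ), t ≤ d n :=
    fun t => hU (hdtop.eventually_ge_atTop t)
  have key : ∀ t : ℝ, ∃ y, Tendsto (fun n => g n t) (U : Filter ℕ) (nhds y) := by
    intro t
    have hK : IsCompact (closedBall x |t|) := isCompact_closedBall x |t|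
    have hle : (U.map (fun n => g n t) : Filter X) ≤ Filter.principal (closedBall x |t|) := by
      rw [le_principal_iff, Ultrafilter.coe_map, Filter.mem_map]
      exact Filter.univ_mem' (fun n => hgball n t)
    obtain ⟨y, _, hy⟩ := hK.ultrafilter_le_nhds (U.map (fun n => g n t)) hle
    exact ⟨y, hy⟩
  choose γ hγ using key
  refine ⟨γ, ?_, ?_, ?_⟩
  · -- γ 0 = x
    have h2 : Tendsto (fun n => g n 0) (U : Filter ℕ) (nhds x) := by
      simp only [hg0]; exact tendsto_const_nhds
    exact tendsto_nhds_unique (hγ 0) h2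
  · -- ray property
    intro s t hs ht
    have h1 : Tendsto (fun n => dist (g n s) (g n t)) (U : Filter ℕ)
        (nhds (dist (γ s) (γ t))) := (hγ s).dist (hγ t)
    have h2 : Tendsto (fun n => dist (g n s) (g n t)) (U : Filter ℕ) (nhds |s - t|) := by
      refine tendsto_const_nhds.congr' ?_
      filter_upwards [hEv s, hEv t] with n hs' ht'
      exact (hgdist n s t hs ht hs' ht').symm
    exact tendsto_nhds_unique h1 h2
  · -- calibration
    intro t ht
    have h1 : Tendsto (fun n => u (g n t)) (U : Filter ℕ) (nhds (u (γ t))) :=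
      (hucont.tendsto _).comp (hγ t)
    have hA : Tendsto (fun n => f n (g n t)) (U : Filter ℕ) (nhds (u x - t)) := by
      have hax : Tendsto (fun n => f n x - t) atTop (nhds (u x - t)) :=
        (hu x).sub_const t
      refine (hax.mono_left hU).congr' ?_
      filter_upwards [hEv t] with n h1'
      exact (hcal n t ht h1').symm
    have hd0' : Tendsto (fun n => dist (g n t) (γ t)) (U : Filter ℕ) (nhds 0) := by
      have := (hγ t).dist (tendsto_const_nhds (x := γ t) (f := (U : Filter ℕ)))
      simpa using this
    have hb : Tendsto (fun n => 2 * dist (g n t) (γ t) + |u (γ t) - f n (γ t)|)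
        (U : Filter ℕ) (nhds 0) := by
      have h2 : Tendsto (fun n => |u (γ t) - f n (γ t)|) atTop (nhds 0) := by
        have := ((hu (γ t)).const_sub (u (γ t))).abs
        simpa using this
      have := ((hd0'.const_mul 2).add (h2.mono_left hU))
      simpa using this
    have hB : Tendsto (fun n => u (g n t) - f n (g n t)) (U : Filter ℕ) (nhds 0) := by
      refine squeeze_zero_norm (fun n => ?_) hb
      have e1 : |u (g n t) - u (γ t)| ≤ dist (g n t) (γ t) := hulip _ _
      have e2 : |f n (γ t) - f n (g n t)| ≤ dist (γ t) (g n t) := hflip n _ _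
      rw [dist_comm (γ t) (g n t)] at e2
      have : u (g n t) - f n (g n t) =
          (u (g n t) - u (γ t)) + (u (γ t) - f n (γ t)) + (f n (γ t) - f n (g n t)) := by
        ring
      rw [Real.norm_eq_abs, this]
      calc |(u (g n t) - u (γ t)) + (u (γ t) - f n (γ t)) + (f n (γ t) - f n (g n t))|
          ≤ |(u (g n t) - u (γ t)) + (u (γ t) - f n (γ t))| + |f n (γ t) - f n (g n t)| :=
            abs_add_le _ _
        _ ≤ |u (g n t) - u (γ t)| + |u (γ t) - f n (γ t)| + |f n (γ t) - f n (g n t)| := by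
            linarith [abs_add_le (u (g n t) - u (γ t)) (u (γ t) - f n (γ t))]
        _ ≤ 2 * dist (g n t) (γ t) + |u (γ t) - f n (γ t)| := by linarith
    have h2 : Tendsto (fun n => u (g n t)) (U : Filter ℕ) (nhds (u x - t)) := by
      have := hA.add hB
      simp only [add_sub_cancel] at this
      simpa using this
    exact tendsto_nhds_unique h1 h2
end

section
/- Let X be a nonempty proper, noncompact geodesic metric space. A function u : X → ℝ is a dl-function if and only if u is continuous and satisfies Gromov's condition: for every t ∈ ℝ and every x ∈ X with u(x) ≥ t, the sublevel set {y ∈ X : u(y) < t} is nonempty and u(x) = t + d(x, {y ∈ X : u(y) < t}). -/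
open Metric Filter

/-- Lower bound for `infDist`. -/
lemma le_infDist_of_forall {X : Type*} [MetricSpace X] {s : Set X} {x : X} {b : ℝ}
    (hne : s.Nonempty) (h : ∀ y ∈ s, b ≤ dist x y) : b ≤ infDist x s := by
  have : Nonempty s := hne.to_subtype
  rw [infDist_eq_iInf]
  exact le_ciInf fun y => h y y.2

/-- a function is a dl-function iff it is continuous and satisfies
Gromov's condition `u(x) = t + d(x, {u < t})` whenever `u(x) ≥ t`. -/
theorem stmt12 {X : Type*} [MetricSpace X] [Nonempty X] [ProperSpace X] [NoncompactSpace X]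
    (hgeo : IsGeodesicSpace X) (u : X → ℝ) :
    IsDLFunction u ↔
      (Continuous u ∧ ∀ t : ℝ, ∀ x : X, t ≤ u x →
        ({y : X | u y < t}.Nonempty ∧ u x = t + infDist x {y : X | u y < t})) := by
  constructor
  · rintro ⟨H, c, hne, hcl, ⟨z0, hz0⟩, hu⟩
    -- u is 1-Lipschitz
    have hlip : ∀ x y : X, |u x - u y| ≤ dist x y := by
      intro x y
      have hT : Tendsto (fun n => |(infDist x (H n) - c n) - (infDist y (H n) - c n)|)
          atTop (nhds (|u x - u y|)) := ((hu x).sub (hu y)).abs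
      refine le_of_tendsto hT (Eventually.of_forall fun n => ?_)
      have h1 : infDist x (H n) ≤ infDist y (H n) + dist x y := infDist_le_infDist_add_dist
      have h2 : infDist y (H n) ≤ infDist x (H n) + dist y x := infDist_le_infDist_add_dist
      rw [abs_le]
      rw [dist_comm y x] at h2
      constructor <;> [linarith; linarith]
    have hcont : Continuous u := by
      have : LipschitzWith 1 u := by
        refine LipschitzWith.of_dist_le_mul fun x y => ?_
        simpa [Real.dist_eq] using hlip x y
      exact this.continuous
    refine ⟨hcont, fun t x hx => ?_⟩
    -- infDist x (H n) → ∞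
    have hxn : Tendsto (fun n => infDist x (H n)) atTop atTop := by
      refine tendsto_atTop_mono (fun n => ?_)
        (tendsto_atTop_add_const_right _ (-(dist z0 x)) hz0)
      have := @infDist_le_infDist_add_dist X _ (H n) z0 x
      linarith
    -- key claim: for every s > 0 there is p with u p = u x - s and dist x p ≤ s
    have key : ∀ s : ℝ, 0 < s → ∃ p : X, u p = u x - s ∧ dist x p ≤ s := by
      intro s hs
      -- choose points along geodesics
      have hch : ∀ n : ℕ, ∃ p : X, dist x p ≤ s ∧
          (s ≤ infDist x (H n) → infDist p (H n) = infDist x (H n) - s) := by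
        intro n
        by_cases h : s ≤ infDist x (H n)
        · obtain ⟨y, hy, hdy⟩ := (hcl n).exists_infDist_eq_dist (hne n) x
          obtain ⟨γ, hγ0, hγ1, hγ⟩ := hgeo x y
          have hsd : s ≤ dist x y := hdy ▸ h
          have h0mem : (0 : ℝ) ∈ Set.Icc (0 : ℝ) (dist x y) := ⟨le_refl _, dist_nonneg⟩
          have hsmem : s ∈ Set.Icc (0 : ℝ) (dist x y) := ⟨hs.le, hsd⟩
          have hdmem : dist x y ∈ Set.Icc (0 : ℝ) (dist x y) := ⟨dist_nonneg, le_refl _⟩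
          refine ⟨γ s, ?_, fun _ => ?_⟩
          · have := hγ 0 h0mem s hsmem
            rw [hγ0] at this
            rw [this, abs_of_nonpos (show (0:ℝ) - s ≤ 0 by linarith)]
            linarith
          · have hps : dist (γ s) y = dist x y - s := by
              have := hγ s hsmem (dist x y) hdmem
              rw [hγ1] at this
              rw [this, abs_of_nonpos (show s - dist x y ≤ 0 by linarith)]
              ring
            have hle : infDist (γ s) (H n) ≤ dist x y - s := by
              rw [← hps]; exact infDist_le_dist_of_mem hy
            have hxp : dist x (γ s) ≤ s := by
              have := hγ 0 h0mem s hsmem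
              rw [hγ0] at this
              rw [this, abs_of_nonpos (show (0:ℝ) - s ≤ 0 by linarith)]
              linarith
            have hge : infDist x (H n) ≤ infDist (γ s) (H n) + dist x (γ s) :=
              infDist_le_infDist_add_dist
            rw [hdy]
            linarith
        · exact ⟨x, by simpa using hs.le, fun h' => absurd h' h⟩
      choose p hp1 hp2 using hch
      -- extract convergent subsequence in the compact closed ball
      have hpb : ∀ n, p n ∈ closedBall x s := fun n => by
        rw [mem_closedBall, dist_comm]; exact hp1 n
      obtain ⟨q, hq, φ, hφ, hconv⟩ := (isCompact_closedBall x s).tendsto_subseq hpb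
      refine ⟨q, ?_, by simpa [dist_comm] using hq⟩
      -- the sequence f_{φ k}(p_{φ k}) tends to u q
      have h1 : Tendsto (fun k => infDist (p (φ k)) (H (φ k)) - c (φ k)) atTop (nhds (u q)) := by
        rw [tendsto_iff_dist_tendsto_zero]
        have ha : Tendsto (fun k => dist (p (φ k)) q) atTop (nhds 0) :=
          (tendsto_iff_dist_tendsto_zero.1 hconv)
        have hb : Tendsto (fun k => dist (infDist q (H (φ k)) - c (φ k)) (u q))
            atTop (nhds 0) :=
          tendsto_iff_dist_tendsto_zero.1 ((hu q).comp hφ.tendsto_atTop)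
        have hg : Tendsto (fun k => dist (p (φ k)) q
            + dist (infDist q (H (φ k)) - c (φ k)) (u q)) atTop (nhds 0) := by
          have := ha.add hb; rwa [add_zero] at this
        refine squeeze_zero (fun k => dist_nonneg) (fun k => ?_) hg
        have h2 : dist (infDist (p (φ k)) (H (φ k)) - c (φ k)) (infDist q (H (φ k)) - c (φ k))
            ≤ dist (p (φ k)) q := by
          rw [Real.dist_eq]
          have ha : infDist (p (φ k)) (H (φ k)) ≤ infDist q (H (φ k)) + dist (p (φ k)) q :=
            infDist_le_infDist_add_dist
          have hb : infDist q (H (φ k)) ≤ infDist (p (φ k)) (H (φ k)) + dist q (p (φ k)) :=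
            infDist_le_infDist_add_dist
          rw [dist_comm q (p (φ k))] at hb
          rw [abs_le]
          constructor <;> [linarith; linarith]
        calc dist (infDist (p (φ k)) (H (φ k)) - c (φ k)) (u q)
            ≤ dist (infDist (p (φ k)) (H (φ k)) - c (φ k)) (infDist q (H (φ k)) - c (φ k))
              + dist (infDist q (H (φ k)) - c (φ k)) (u q) := dist_triangle _ _ _
          _ ≤ dist (p (φ k)) q + dist (infDist q (H (φ k)) - c (φ k)) (u q) := by linarith
      -- and it also tends to u x - s
      have h2 : Tendsto (fun k => infDist (p (φ k)) (H (φ k)) - c (φ k)) atTop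
          (nhds (u x - s)) := by
        have hev : ∀ᶠ k in atTop, infDist (p (φ k)) (H (φ k)) - c (φ k)
            = (infDist x (H (φ k)) - c (φ k)) - s := by
          filter_upwards [(hxn.comp hφ.tendsto_atTop).eventually_ge_atTop s] with k hk
          rw [hp2 (φ k) hk]; ring
        exact (((hu x).comp hφ.tendsto_atTop).sub_const s).congr'
          (hev.mono fun k hk => hk.symm)
      exact tendsto_nhds_unique h1 h2
    -- nonemptiness of sublevel set
    obtain ⟨p0, hp0, _⟩ := key (u x - t + 1) (by linarith)
    have hSne : ({y : X | u y < t}).Nonempty := ⟨p0, by simp only [Set.mem_setOf_eq]; linarith⟩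
    refine ⟨hSne, ?_⟩
    have hub : infDist x {y : X | u y < t} ≤ u x - t := by
      refine le_of_forall_pos_le_add fun ε hε => ?_
      obtain ⟨p, hp, hdp⟩ := key (u x - t + ε / 2) (by linarith)
      have hpmem : p ∈ {y : X | u y < t} := by simp only [Set.mem_setOf_eq]; linarith
      have := infDist_le_dist_of_mem (x := x) hpmem
      linarith
    have hlb : u x - t ≤ infDist x {y : X | u y < t} := by
      refine le_infDist_of_forall hSne fun y hy => ?_
      have h2 : u y < t := hy
      have h3 := (le_abs_self (u x - u y)).trans (hlip x y)
      linarith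
    linarith
  · rintro ⟨hc, hG⟩
    obtain ⟨x0⟩ := ‹Nonempty X›
    set T : ℕ → ℝ := fun n => u x0 - n with hT
    have hTle : ∀ n, T n ≤ u x0 := fun n => by
      simp only [hT]; have : (0 : ℝ) ≤ n := Nat.cast_nonneg n; linarith
    -- the key identity: for T n ≤ u x, infDist to the closed sublevel equals to open sublevel
    have hkey : ∀ (x : X) (n : ℕ), T n ≤ u x →
        infDist x {y : X | u y ≤ T n} = u x - T n := by
      intro x n hn
      obtain ⟨hSne, hSeq⟩ := hG (T n) x hn
      have hsub : {y : X | u y < T n} ⊆ {y : X | u y ≤ T n} :=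
        Set.setOf_subset_setOf.2 fun y hy => le_of_lt hy
      have hle : infDist x {y : X | u y ≤ T n} ≤ infDist x {y : X | u y < T n} :=
        infDist_le_infDist_of_subset hsub hSne
      have hge : infDist x {y : X | u y < T n} ≤ infDist x {y : X | u y ≤ T n} := by
        refine le_infDist_of_forall (hSne.mono hsub) fun y hy => ?_
        -- for y with u y ≤ T n, infDist y {u < T n} = 0
        obtain ⟨hSne', hSeq'⟩ := hG (u y) y le_rfl
        have h0 : infDist y {z : X | u z < u y} = 0 := by linarith
        have hsub' : {z : X | u z < u y} ⊆ {z : X | u z < T n} :=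
          Set.setOf_subset_setOf.2 fun z hz => lt_of_lt_of_le hz hy
        have : infDist y {z : X | u z < T n} ≤ infDist y {z : X | u z < u y} :=
          infDist_le_infDist_of_subset hsub' hSne'
        have h0' : infDist y {z : X | u z < T n} = 0 :=
          le_antisymm (by linarith) infDist_nonneg
        have := @infDist_le_infDist_add_dist X _ {z : X | u z < T n} x y
        rw [h0'] at this
        linarith
      have : infDist x {y : X | u y ≤ T n} = infDist x {y : X | u y < T n} :=
        le_antisymm hle hge
      rw [this]; linarith
    refine ⟨fun n => {y : X | u y ≤ T n}, fun n => -(T n), fun n => ?_, fun n => ?_,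
      ⟨x0, ?_⟩, fun x => ?_⟩
    · exact ((hG (T n) x0 (hTle n)).1).mono
        (Set.setOf_subset_setOf.2 fun y hy => le_of_lt hy)
    · exact isClosed_le hc continuous_const
    · have heq : ∀ n : ℕ, infDist x0 {y : X | u y ≤ T n} = (n : ℝ) := by
        intro n
        rw [hkey x0 n (hTle n)]
        simp [hT]
      refine tendsto_atTop_mono (fun n => le_of_eq (heq n).symm) tendsto_natCast_atTop_atTop
    · have hev : ∀ᶠ n in atTop, infDist x {y : X | u y ≤ T n} - -(T n) = u x := by
        have : ∀ᶠ n in atTop, T n ≤ u x := by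
          filter_upwards [eventually_ge_atTop ⌈u x0 - u x⌉₊] with n hn
          have h1 : u x0 - u x ≤ (⌈u x0 - u x⌉₊ : ℝ) := Nat.le_ceil _
          have h2 : ((⌈u x0 - u x⌉₊ : ℕ) : ℝ) ≤ (n : ℝ) := Nat.cast_le.2 hn
          simp only [hT]; linarith
        filter_upwards [this] with n hn
        rw [hkey x n hn]; ring
      exact tendsto_const_nhds.congr' (hev.mono fun n hn => hn.symm)
end

section
/- Let X be a nonempty proper, noncompact geodesic metric space. If u_n : X → ℝ is a sequence of dl-functions that converges uniformly on every compact subset of X to a continuous function u : X → ℝ, then u is a dl-function. -/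
open Metric Filter

private lemma abs_infDist_sub_le {X : Type*} [MetricSpace X] (s : Set X) (x y : X) :
    |infDist x s - infDist y s| ≤ dist x y := by
  rw [abs_sub_le_iff]
  constructor
  · have := infDist_le_infDist_add_dist (s := s) (x := x) (y := y)
    linarith
  · have := infDist_le_infDist_add_dist (s := s) (x := y) (y := x)
    rw [dist_comm] at this
    linarith

/-- stability of dl-functions under locally uniform convergence. -/
theorem stmt13 {X : Type*} [MetricSpace X] [Nonempty X] [ProperSpace X] [NoncompactSpace X]
    (hgeo : IsGeodesicSpace X)
    (v : ℕ → X → ℝ) (hv : ∀ n, IsDLFunction (v n))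
    (u : X → ℝ) (hu : Continuous u)
    (hconv : ∀ K : Set X, IsCompact K → TendstoUniformlyOn (fun n => v n) u atTop K) :
    IsDLFunction u := by
  classical
  obtain ⟨z0⟩ := ‹Nonempty X›
  -- pointwise convergence of v n to u
  have hptwise : ∀ x : X, Tendsto (fun n => v n x) atTop (nhds (u x)) := fun x =>
    (hconv {x} isCompact_singleton).tendsto_at (Set.mem_singleton x)
  -- key selection for each m
  have key : ∀ m : ℕ, ∃ (S : Set X) (cS : ℝ), S.Nonempty ∧ IsClosed S ∧
      (m : ℝ) ≤ infDist z0 S ∧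
      ∀ x ∈ closedBall z0 (m : ℝ), |infDist x S - cS - v m x| ≤ 1 / ((m : ℝ) + 1) := by
    intro m
    obtain ⟨H, c, hne, hcl, ⟨z, hz⟩, hpt⟩ := hv m
    -- v m is 1-Lipschitz
    have hlip : ∀ x y : X, |v m x - v m y| ≤ dist x y := by
      intro x y
      have h1 : Tendsto (fun k => |(infDist x (H k) - c k) - (infDist y (H k) - c k)|)
          atTop (nhds |v m x - v m y|) := ((hpt x).sub (hpt y)).abs
      refine le_of_tendsto h1 (Eventually.of_forall fun k => ?_)
      have h2 := abs_infDist_sub_le (H k) x y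
      calc |(infDist x (H k) - c k) - (infDist y (H k) - c k)|
          = |infDist x (H k) - infDist y (H k)| := by ring_nf
        _ ≤ dist x y := h2
    set ε : ℝ := 1 / (3 * ((m : ℝ) + 1)) with hεdef
    have hεpos : 0 < ε := by positivity
    obtain ⟨F, hFsub, hFfin, hFcov⟩ :=
      (isCompact_closedBall z0 (m : ℝ)).finite_cover_balls (e := ε) hεpos
    -- divergence at z0
    have hdiv0 : Tendsto (fun k => infDist z0 (H k)) atTop atTop := by
      refine tendsto_atTop_mono (fun k => ?_)
        (tendsto_atTop_add_const_right atTop (-(dist z z0)) hz)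
      have := infDist_le_infDist_add_dist (s := H k) (x := z) (y := z0)
      linarith
    have hev1 : ∀ᶠ k in atTop, (m : ℝ) ≤ infDist z0 (H k) := hdiv0.eventually_ge_atTop _
    have hev2 : ∀ᶠ k in atTop, ∀ y ∈ F, |infDist y (H k) - c k - v m y| ≤ ε := by
      rw [eventually_all_finite hFfin]
      intro y _
      have h := Metric.tendsto_nhds.mp (hpt y) ε hεpos
      filter_upwards [h] with k hk
      rw [Real.dist_eq] at hk
      exact le_of_lt (by simpa [sub_sub] using hk)
    obtain ⟨k, hk1, hk2⟩ := (hev1.and hev2).exists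
    refine ⟨H k, c k, hne k, hcl k, hk1, ?_⟩
    intro x hx
    obtain ⟨y, hyF, hxy⟩ := Set.mem_iUnion₂.mp (hFcov hx)
    rw [mem_ball] at hxy
    have h1 := abs_infDist_sub_le (H k) x y
    have h2 := hk2 y hyF
    have h3 := hlip y x
    have hdyx : dist y x < ε := by rwa [dist_comm] at hxy
    have hfin : |infDist x (H k) - c k - v m x| ≤ 3 * ε := by
      have : infDist x (H k) - c k - v m x =
          (infDist x (H k) - infDist y (H k)) + (infDist y (H k) - c k - v m y)
            + (v m y - v m x) := by ring
      rw [this]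
      calc |(infDist x (H k) - infDist y (H k)) + (infDist y (H k) - c k - v m y)
            + (v m y - v m x)|
          ≤ |infDist x (H k) - infDist y (H k)| + |infDist y (H k) - c k - v m y|
            + |v m y - v m x| := abs_add_three _ _ _
        _ ≤ dist x y + ε + dist y x := by
            gcongr
        _ ≤ 3 * ε := by linarith [hxy, hdyx]
    have : 3 * ε = 1 / ((m : ℝ) + 1) := by
      rw [hεdef]
      field_simp
    linarith [hfin, this.le]
  choose S cS hSne hScl hSdiv hSapprox using key
  refine ⟨S, cS, hSne, hScl, ⟨z0, ?_⟩, ?_⟩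
  · exact tendsto_atTop_mono hSdiv tendsto_natCast_atTop_atTop
  · intro x
    have herr : Tendsto (fun m => infDist x (S m) - cS m - v m x) atTop (nhds 0) := by
      have hb : ∀ᶠ m in atTop, |infDist x (S m) - cS m - v m x| ≤ 1 / ((m : ℝ) + 1) := by
        filter_upwards [eventually_ge_atTop ⌈dist x z0⌉₊] with m hm
        refine hSapprox m x ?_
        rw [mem_closedBall]
        exact le_trans (Nat.le_ceil _) (by exact_mod_cast Nat.cast_le.mpr hm)
      have hlim : Tendsto (fun m : ℕ => 1 / ((m : ℝ) + 1)) atTop (nhds 0) :=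
        tendsto_one_div_add_atTop_nhds_zero_nat
      exact squeeze_zero_norm' (by simpa [Real.norm_eq_abs] using hb) hlim
    have := herr.add (hptwise x)
    rw [zero_add] at this
    convert this using 2 with m
    ring
end

section
/- Let X be a metric space satisfying the non-branching property: for all a < b and any two maps ξ, η : [a,b] → X with d(ξ(s), ξ(t)) = |s − t| and d(η(s), η(t)) = |s − t| for all s,t ∈ [a,b], if ξ(a) = η(a) and ξ(t) = η(t) for some t ∈ (a,b), then ξ = η on [a,b]. Let u : X → ℝ be 1-Lipschitz, let γ : [0,∞) → X be a geodesic ray with u(γ(t2)) − u(γ(t1)) = t1 − t2 for all 0 ≤ t1 ≤ t2, let t0 > 0, and let ξ : [0,∞) → X be a geodesic ray with ξ(0) = γ(t0) and u(ξ(t2)) − u(ξ(t1)) = t1 − t2 for all 0 ≤ t1 ≤ t2. Then ξ(t) = γ(t0 + t) for all t ≥ 0. -/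
open Metric Filter

/-- in a non-branching metric space, a calibrated geodesic ray
starting at `γ(t0)` must be the corresponding sub-ray of `γ`. -/
theorem stmt14 {X : Type*} [MetricSpace X]
    (hNB : ∀ a b : ℝ, a < b → ∀ ξ η : ℝ → X,
      (∀ s ∈ Set.Icc a b, ∀ t ∈ Set.Icc a b, dist (ξ s) (ξ t) = |s - t|) →
      (∀ s ∈ Set.Icc a b, ∀ t ∈ Set.Icc a b, dist (η s) (η t) = |s - t|) →
      ξ a = η a → (∃ t ∈ Set.Ioo a b, ξ t = η t) →
      ∀ t ∈ Set.Icc a b, ξ t = η t)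
    (u : X → ℝ) (hLip : ∀ x y : X, |u x - u y| ≤ dist x y)
    (γ : ℝ → X) (hγ : ∀ s t : ℝ, 0 ≤ s → 0 ≤ t → dist (γ s) (γ t) = |s - t|)
    (hγcal : ∀ t1 t2 : ℝ, 0 ≤ t1 → t1 ≤ t2 → u (γ t2) - u (γ t1) = t1 - t2)
    (t0 : ℝ) (ht0 : 0 < t0)
    (ξ : ℝ → X) (hξ : ∀ s t : ℝ, 0 ≤ s → 0 ≤ t → dist (ξ s) (ξ t) = |s - t|)
    (hξ0 : ξ 0 = γ t0)
    (hξcal : ∀ t1 t2 : ℝ, 0 ≤ t1 → t1 ≤ t2 → u (ξ t2) - u (ξ t1) = t1 - t2) :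
    ∀ t : ℝ, 0 ≤ t → ξ t = γ (t0 + t) := by
  intro t ht
  -- concatenated curve
  set ζ : ℝ → X := fun s => if s ≤ t0 then γ s else ξ (s - t0) with hζdef
  -- values of u along the rays
  have huγ : ∀ s : ℝ, 0 ≤ s → u (γ s) = u (γ 0) - s := by
    intro s hs
    have := hγcal 0 s le_rfl hs
    linarith
  have huξ : ∀ r : ℝ, 0 ≤ r → u (ξ r) = u (γ 0) - t0 - r := by
    intro r hr
    have h1 := hξcal 0 r le_rfl hr
    have h2 : u (ξ 0) = u (γ 0) - t0 := by
      rw [hξ0, huγ t0 ht0.le]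
    linarith
  -- mixed distance
  have hmix : ∀ s r : ℝ, 0 ≤ s → s ≤ t0 → 0 ≤ r →
      dist (γ s) (ξ r) = (t0 + r) - s := by
    intro s r hs hst0 hr
    have hupper : dist (γ s) (ξ r) ≤ (t0 - s) + r := by
      calc dist (γ s) (ξ r) ≤ dist (γ s) (γ t0) + dist (γ t0) (ξ r) := dist_triangle _ _ _
        _ = (t0 - s) + r := by
            rw [hγ s t0 hs ht0.le, ← hξ0, hξ 0 r le_rfl hr]
            rw [abs_of_nonpos (by linarith), abs_of_nonpos (by linarith)]
            ring
    have hlower : (t0 + r) - s ≤ dist (γ s) (ξ r) := by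
      have := hLip (γ s) (ξ r)
      rw [huγ s hs, huξ r hr] at this
      have h2 : |u (γ 0) - s - (u (γ 0) - t0 - r)| = (t0 + r) - s := by
        rw [abs_of_nonneg (by linarith)]; ring
      linarith [le_abs_self (u (γ 0) - s - (u (γ 0) - t0 - r)), h2 ▸ this]
    linarith
  -- ζ is a geodesic on [0, ∞)
  have hζ : ∀ s ∈ Set.Icc (0:ℝ) (t0 + t + 1), ∀ r ∈ Set.Icc (0:ℝ) (t0 + t + 1),
      dist (ζ s) (ζ r) = |s - r| := by
    have key : ∀ s r : ℝ, 0 ≤ s → 0 ≤ r → dist (ζ s) (ζ r) = |s - r| := by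
      have aux : ∀ s r : ℝ, 0 ≤ s → 0 ≤ r → s ≤ r → dist (ζ s) (ζ r) = |s - r| := by
        intro s r hs hr hsr
        simp only [hζdef]
        by_cases h1 : s ≤ t0
        · rw [if_pos h1]
          by_cases h2 : r ≤ t0
          · rw [if_pos h2]; exact hγ s r hs hr
          · rw [if_neg h2]
            push_neg at h2
            rw [hmix s (r - t0) hs h1 (by linarith)]
            rw [abs_of_nonpos (by linarith)]; ring
        · push_neg at h1
          rw [if_neg h1.not_ge, if_neg (by push_neg; linarith : ¬ r ≤ t0)]
          rw [hξ (s - t0) (r - t0) (by linarith) (by linarith)]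
          congr 1; ring
      intro s r hs hr
      rcases le_total s r with h | h
      · exact aux s r hs hr h
      · rw [dist_comm, aux r s hr hs h, abs_sub_comm]
    intro s hs r hr
    exact key s r hs.1 hr.1
  have hγ' : ∀ s ∈ Set.Icc (0:ℝ) (t0 + t + 1), ∀ r ∈ Set.Icc (0:ℝ) (t0 + t + 1),
      dist (γ s) (γ r) = |s - r| := fun s hs r hr => hγ s r hs.1 hr.1
  have hza : ζ 0 = γ 0 := by simp [hζdef, ht0.le]
  have hzt0 : ζ t0 = γ t0 := by simp [hζdef]
  have := hNB 0 (t0 + t + 1) (by linarith) ζ γ hζ hγ' hza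
    ⟨t0, ⟨ht0, by linarith⟩, hzt0⟩ (t0 + t) ⟨by linarith, by linarith⟩
  have hval : ζ (t0 + t) = ξ t := by
    rcases eq_or_lt_of_le ht with h | h
    · simp [hζdef, ← h, hξ0]
    · rw [hζdef]; simp only []
      rw [if_neg (by linarith)]
      congr 1; ring
  rw [← hval, this]
end

section
/- Let X be a nonempty proper, noncompact geodesic metric space and let u : X → ℝ be a dl-function. Then for every x ∈ X: (a) for every geodesic ray γ : [0,∞) → X calibrated by u (i.e., u(γ(t)) = u(γ(0)) − t for all t ≥ 0), one has u(x) ≤ u(γ(0)) + b_γ(x); and (b) there exists a geodesic ray γ calibrated by u with γ(0) = x and u(x) = u(γ(0)) + b_γ(x). Consequently u(x) equals the infimum of u(γ(0)) + b_γ(x) over all geodesic rays γ calibrated by u. -/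
open Metric Filter

/-- representation formula for a dl-function in terms of Busemann
functions of its calibrated rays:
`u(x) = inf { u(γ(0)) + b_γ(x) : γ calibrated by u }`, with the infimum attained
by a calibrated ray starting from `x`. -/
theorem stmt15 {X : Type*} [MetricSpace X] [Nonempty X] [ProperSpace X] [NoncompactSpace X]
    (hgeo : IsGeodesicSpace X)
    (u : X → ℝ) (hdl : IsDLFunction u) (x : X) :
    (∀ γ : ℝ → X,
      (∀ s t : ℝ, 0 ≤ s → 0 ≤ t → dist (γ s) (γ t) = |s - t|) →
      (∀ t : ℝ, 0 ≤ t → u (γ t) = u (γ 0) - t) →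
      ∀ L : ℝ, Tendsto (fun t : ℝ => dist x (γ t) - t) atTop (nhds L) →
        u x ≤ u (γ 0) + L) ∧
    (∃ γ : ℝ → X,
      (∀ s t : ℝ, 0 ≤ s → 0 ≤ t → dist (γ s) (γ t) = |s - t|) ∧
      (∀ t : ℝ, 0 ≤ t → u (γ t) = u (γ 0) - t) ∧ γ 0 = x ∧
      ∃ L : ℝ, Tendsto (fun t : ℝ => dist x (γ t) - t) atTop (nhds L) ∧
        u x = u (γ 0) + L) ∧
    u x = sInf {w : ℝ | ∃ γ : ℝ → X,
      (∀ s t : ℝ, 0 ≤ s → 0 ≤ t → dist (γ s) (γ t) = |s - t|) ∧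
      (∀ t : ℝ, 0 ≤ t → u (γ t) = u (γ 0) - t) ∧
      ∃ L : ℝ, Tendsto (fun t : ℝ => dist x (γ t) - t) atTop (nhds L) ∧
        w = u (γ 0) + L} := by
  obtain ⟨H, c, hne, hcl, ⟨z0, hz0⟩, hconv⟩ := hdl
  -- u is 1-Lipschitz
  have hulip : ∀ a b : X, u a ≤ u b + dist a b := by
    intro a b
    refine le_of_tendsto_of_tendsto' (hconv a) ((hconv b).add tendsto_const_nhds) fun n => ?_
    have : infDist a (H n) ≤ infDist b (H n) + dist a b := infDist_le_infDist_add_dist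
    linarith
  -- Part (a)
  have partA : ∀ γ : ℝ → X,
      (∀ s t : ℝ, 0 ≤ s → 0 ≤ t → dist (γ s) (γ t) = |s - t|) →
      (∀ t : ℝ, 0 ≤ t → u (γ t) = u (γ 0) - t) →
      ∀ L : ℝ, Tendsto (fun t : ℝ => dist x (γ t) - t) atTop (nhds L) →
        u x ≤ u (γ 0) + L := by
    intro γ _ hcal L hL
    have hT : Tendsto (fun t : ℝ => u (γ 0) + (dist x (γ t) - t)) atTop
        (nhds (u (γ 0) + L)) := tendsto_const_nhds.add hL
    refine ge_of_tendsto hT ?_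
    filter_upwards [eventually_ge_atTop (0 : ℝ)] with t ht
    have h1 := hulip x (γ t)
    rw [hcal t ht] at h1
    linarith
  -- Construction of a calibrated ray from x
  have hdx : Tendsto (fun n => infDist x (H n)) atTop atTop := by
    refine tendsto_atTop_mono (fun n => ?_) (tendsto_atTop_add_const_right _ (-dist z0 x) hz0)
    have : infDist z0 (H n) ≤ infDist x (H n) + dist z0 x := infDist_le_infDist_add_dist
    linarith
  choose p hpH hpd using fun n => (hcl n).exists_infDist_eq_dist (hne n) x
  choose g hg0 hgend hgiso using fun n => hgeo x (p n)
  set dn : ℕ → ℝ := fun n => dist x (p n) with hdn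
  have hdn0 : ∀ n, 0 ≤ dn n := fun n => dist_nonneg
  have hdnT : Tendsto dn atTop atTop := by
    refine hdx.congr fun n => ?_
    rw [hpd]
  set cl : ℝ → ℕ → ℝ := fun t n => max 0 (min t (dn n)) with hclr
  have hclmem : ∀ t n, cl t n ∈ Set.Icc (0 : ℝ) (dn n) := by
    intro t n
    constructor
    · exact le_max_left _ _
    · exact max_le (hdn0 n) (min_le_right _ _)
  have hcleq : ∀ t n, 0 ≤ t → t ≤ dn n → cl t n = t := by
    intro t n h0 h1
    simp [hclr, min_eq_left h1, max_eq_right h0]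
  set γn : ℕ → ℝ → X := fun n t => g n (cl t n) with hγn
  have hγdist : ∀ n s t, dist (γn n s) (γn n t) = |cl s n - cl t n| := by
    intro n s t
    exact hgiso n _ (hclmem s n) _ (hclmem t n)
  have hγx : ∀ n t, dist x (γn n t) = cl t n := by
    intro n t
    have h0 : cl 0 n = 0 := hcleq 0 n le_rfl (hdn0 n)
    have := hγdist n 0 t
    rw [h0] at this
    have hx0 : γn n 0 = x := by
      simp [hγn, h0, hg0 n]
    rw [hx0] at this
    rw [this, abs_of_nonpos (by linarith [(hclmem t n).1]), neg_sub, sub_zero]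
  -- ultrafilter limit
  set F : Ultrafilter ℕ := Ultrafilter.of atTop with hF
  have hFle : (F : Filter ℕ) ≤ atTop := Ultrafilter.of_le _
  have hlim : ∀ t : ℝ, ∃ y : X, Tendsto (fun n => γn n t) F (nhds y) := by
    intro t
    have hball : ∀ n, γn n t ∈ closedBall x |t| := by
      intro n
      rw [mem_closedBall, dist_comm, hγx n t]
      exact le_trans (max_le (abs_nonneg t) (le_trans (min_le_left _ _) (le_abs_self t)))
        le_rfl
    obtain ⟨y, _, hy⟩ := (isCompact_closedBall x |t|).ultrafilter_le_nhds
      (F.map (fun n => γn n t))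
      (le_principal_iff.2 (mem_map.2 (Eventually.of_forall hball)))
    exact ⟨y, hy⟩
  choose γ hγ using hlim
  have huniq : ∀ {f : ℕ → ℝ} {a b : ℝ}, Tendsto f F (nhds a) → Tendsto f F (nhds b) → a = b :=
    fun h1 h2 => tendsto_nhds_unique h1 h2
  have hγ0 : γ 0 = x := by
    have h0 : ∀ n, γn n 0 = x := by
      intro n
      simp [hγn, hcleq 0 n le_rfl (hdn0 n), hg0 n]
    exact tendsto_nhds_unique ((hγ 0).congr fun n => (h0 n)) tendsto_const_nhds
  have hray : ∀ s t : ℝ, 0 ≤ s → 0 ≤ t → dist (γ s) (γ t) = |s - t| := by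
    intro s t hs ht
    have hev : ∀ᶠ n in (F : Filter ℕ), dist (γn n s) (γn n t) = |s - t| := by
      refine hFle ?_
      filter_upwards [hdnT.eventually_ge_atTop (max s t)] with n hn
      rw [hγdist n s t, hcleq s n hs (le_trans (le_max_left _ _) hn),
        hcleq t n ht (le_trans (le_max_right _ _) hn)]
    have h1 : Tendsto (fun n => dist (γn n s) (γn n t)) F (nhds (dist (γ s) (γ t))) :=
      (hγ s).dist (hγ t)
    have h2 : Tendsto (fun n => dist (γn n s) (γn n t)) F (nhds |s - t|) :=
      Tendsto.congr' (by filter_upwards [hev] with n hn using hn.symm) tendsto_const_nhds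
    exact huniq h1 h2
  have hinfγn : ∀ t : ℝ, 0 ≤ t → ∀ n, t ≤ dn n → infDist (γn n t) (H n) = dn n - t := by
    intro t ht n hn
    have hc : cl t n = t := hcleq t n ht hn
    have hend : γn n (dn n) = p n := by
      simp only [hγn, hcleq (dn n) n (hdn0 n) le_rfl]
      exact hgend n
    have hle : infDist (γn n t) (H n) ≤ dn n - t := by
      have hd : dist (γn n t) (p n) = dn n - t := by
        rw [← hend, hγdist n t (dn n), hc, hcleq (dn n) n (hdn0 n) le_rfl,
          abs_of_nonpos (by linarith), neg_sub]
      rw [← hd]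
      exact infDist_le_dist_of_mem (hpH n)
    have hge : dn n - t ≤ infDist (γn n t) (H n) := by
      have h1 : infDist x (H n) ≤ infDist (γn n t) (H n) + dist x (γn n t) :=
        infDist_le_infDist_add_dist
      rw [hγx n t, hc] at h1
      have hdd : dn n = dist x (p n) := rfl
      linarith [h1, hpd n, hdd]
    linarith
  have hcalib : ∀ t : ℝ, 0 ≤ t → u (γ t) = u x - t := by
    intro t ht
    have hA : Tendsto (fun n => infDist (γ t) (H n) - c n) F (nhds (u (γ t))) :=
      (hconv (γ t)).mono_left hFle
    have hB : Tendsto (fun n => infDist (γn n t) (H n) - c n) F (nhds (u x - t)) := by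
      refine Tendsto.congr' ?_ (((hconv x).mono_left hFle).sub tendsto_const_nhds)
      refine hFle ?_
      filter_upwards [hdnT.eventually_ge_atTop t] with n hn
      rw [hinfγn t ht n hn, hpd n]
      ring
    have h0 : Tendsto (fun n => (infDist (γ t) (H n) - c n) -
        (infDist (γn n t) (H n) - c n)) F (nhds 0) := by
      have hd0 : Tendsto (fun n => dist (γn n t) (γ t)) F (nhds 0) :=
        tendsto_iff_dist_tendsto_zero.1 (hγ t)
      refine squeeze_zero_norm (fun n => ?_) hd0
      have h1 : infDist (γ t) (H n) ≤ infDist (γn n t) (H n) + dist (γ t) (γn n t) :=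
        infDist_le_infDist_add_dist
      have h2 : infDist (γn n t) (H n) ≤ infDist (γ t) (H n) + dist (γn n t) (γ t) :=
        infDist_le_infDist_add_dist
      rw [Real.norm_eq_abs, abs_le]
      rw [dist_comm (γ t) (γn n t)] at h1
      constructor <;> linarith
    have hA' : Tendsto (fun n => infDist (γ t) (H n) - c n) F (nhds ((u x - t) + 0)) := by
      refine Tendsto.congr (fun n => by ring) (hB.add h0)
    have := huniq hA hA'
    linarith [this]
  have hbuse : Tendsto (fun t : ℝ => dist x (γ t) - t) atTop (nhds 0) := by
    refine Tendsto.congr' ?_ tendsto_const_nhds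
    filter_upwards [eventually_ge_atTop (0 : ℝ)] with t ht
    have := hray 0 t le_rfl ht
    rw [hγ0] at this
    rw [this, abs_of_nonpos (by linarith), neg_sub, sub_zero]
    ring
  have hcal' : ∀ t : ℝ, 0 ≤ t → u (γ t) = u (γ 0) - t := by
    intro t ht
    rw [hγ0, hcalib t ht]
  have hux : u x = u (γ 0) + 0 := by rw [hγ0]; ring
  refine ⟨partA, ⟨γ, hray, hcal', hγ0, 0, hbuse, hux⟩, ?_⟩
  -- the sInf statement
  have hmem : u x ∈ {w : ℝ | ∃ γ : ℝ → X,
      (∀ s t : ℝ, 0 ≤ s → 0 ≤ t → dist (γ s) (γ t) = |s - t|) ∧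
      (∀ t : ℝ, 0 ≤ t → u (γ t) = u (γ 0) - t) ∧
      ∃ L : ℝ, Tendsto (fun t : ℝ => dist x (γ t) - t) atTop (nhds L) ∧
        w = u (γ 0) + L} := ⟨γ, hray, hcal', 0, hbuse, hux⟩
  have hlb : ∀ w ∈ {w : ℝ | ∃ γ : ℝ → X,
      (∀ s t : ℝ, 0 ≤ s → 0 ≤ t → dist (γ s) (γ t) = |s - t|) ∧
      (∀ t : ℝ, 0 ≤ t → u (γ t) = u (γ 0) - t) ∧
      ∃ L : ℝ, Tendsto (fun t : ℝ => dist x (γ t) - t) atTop (nhds L) ∧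
        w = u (γ 0) + L}, u x ≤ w := by
    rintro w ⟨γ', hray', hcal'', L, hL, rfl⟩
    exact partA γ' hray' hcal'' L hL
  exact le_antisymm (le_csInf ⟨u x, hmem⟩ hlb) (csInf_le ⟨u x, hlb⟩ hmem)
end

section
/- Let X and Y be nonempty proper, noncompact geodesic metric spaces with base points x0 ∈ X, y0 ∈ Y, let ε > 0, and let f : X → Y be a map with f(x0) = y0 such that (a) |d_X(x, x') − d_Y(f(x), f(x'))| ≤ 2ε for all x, x' ∈ X, and (b) for every y ∈ Y there exists x ∈ X with d_Y(y, f(x)) ≤ 2ε (f is a 2ε-isometry). Then for every x ∈ X, |u_{x0}(x) − u_{y0}(f(x))| ≤ 8ε, where u_{x0} and u_{y0} are the point-assigned dl-functions on X and Y respectively. -/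
open Metric Filter

lemma sphere_nonempty_of_geodesic {X : Type*} [MetricSpace X]
    [ProperSpace X] [NoncompactSpace X] (hg : IsGeodesicSpace X)
    (a : X) {r : ℝ} (hr : 0 ≤ r) : (sphere a r).Nonempty := by
  obtain ⟨y, hy⟩ : ∃ y : X, r ≤ dist a y := by
    by_contra h
    push_neg at h
    have hc : IsCompact (Set.univ : Set X) := by
      refine (isCompact_closedBall a r).of_isClosed_subset isClosed_univ ?_
      intro y _
      have := (h y).le
      rw [dist_comm] at this
      exact mem_closedBall.mpr this
    exact NoncompactSpace.noncompact_univ hc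
  obtain ⟨γ, hγ0, hγd, hγ⟩ := hg a y
  refine ⟨γ r, ?_⟩
  have h0 : (0 : ℝ) ∈ Set.Icc (0 : ℝ) (dist a y) := ⟨le_refl _, dist_nonneg⟩
  have hrI : r ∈ Set.Icc (0 : ℝ) (dist a y) := ⟨hr, hy⟩
  have := hγ r hrI 0 h0
  rw [hγ0] at this
  simp only [mem_sphere]
  rw [this]
  rw [abs_of_nonneg (by linarith)]
  ring

lemma lim_le_of_shift {F G : ℝ → ℝ} {u v c d : ℝ}
    (hF : Tendsto F atTop (nhds u)) (hG : Tendsto G atTop (nhds v))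
    (h : ∀ r : ℝ, 0 ≤ r → ∃ s, r - c ≤ s ∧ G s ≤ F r + d) : v ≤ u + d := by
  classical
  set S : ℝ → ℝ := fun r => if hr : 0 ≤ r then Classical.choose (h r hr) else r with hS
  have hSle : ∀ r : ℝ, 0 ≤ r → r - c ≤ S r ∧ G (S r) ≤ F r + d := by
    intro r hr
    simp only [hS, dif_pos hr]
    exact Classical.choose_spec (h r hr)
  have hStend : Tendsto S atTop atTop := by
    apply tendsto_atTop_mono' atTop (f₁ := fun r => r - c)
    · filter_upwards [eventually_ge_atTop (0 : ℝ)] with r hr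
      exact (hSle r hr).1
    · exact tendsto_atTop_add_const_right atTop (-c) tendsto_id
  have hGS : Tendsto (fun r => G (S r)) atTop (nhds v) := hG.comp hStend
  have hFd : Tendsto (fun r => F r + d) atTop (nhds (u + d)) :=
    hF.add tendsto_const_nhds
  refine le_of_tendsto_of_tendsto hGS hFd ?_
  filter_upwards [eventually_ge_atTop (0 : ℝ)] with r hr
  exact (hSle r hr).2

/-- along a `2ε`-isometry `f : (X,x0) → (Y,y0)` the point-assigned
dl-functions satisfy `|u_{x0}(x) − u_{y0}(f(x))| ≤ 8ε`. -/
theorem stmt17 {X Y : Type*} [MetricSpace X] [MetricSpace Y]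
    [Nonempty X] [ProperSpace X] [NoncompactSpace X]
    [Nonempty Y] [ProperSpace Y] [NoncompactSpace Y]
    (hgX : IsGeodesicSpace X) (hgY : IsGeodesicSpace Y)
    (u : X → X → ℝ)
    (hu : ∀ a x : X,
      Tendsto (fun r : ℝ => infDist x (sphere a r) - r) atTop (nhds (u a x)))
    (v : Y → Y → ℝ)
    (hv : ∀ b y : Y,
      Tendsto (fun r : ℝ => infDist y (sphere b r) - r) atTop (nhds (v b y)))
    (x0 : X) (y0 : Y) (ε : ℝ) (hε : 0 < ε)
    (f : X → Y) (hf0 : f x0 = y0)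
    (hdis : ∀ x x' : X, |dist x x' - dist (f x) (f x')| ≤ 2 * ε)
    (hnet : ∀ y : Y, ∃ x : X, dist y (f x) ≤ 2 * ε) :
    ∀ x : X, |u x0 x - v y0 (f x)| ≤ 8 * ε := by
  intro x
  -- Step 1 : v y0 (f x) ≤ u x0 x + 8ε
  have h1 : v y0 (f x) ≤ u x0 x + 8 * ε := by
    refine lim_le_of_shift (c := 2 * ε) (hu x0 x) (hv y0 (f x)) ?_
    intro r hr
    obtain ⟨z, hz, hzd⟩ := ((isCompact_sphere x0 r).exists_infDist_eq_dist
      (sphere_nonempty_of_geodesic hgX x0 hr) x)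
    refine ⟨dist y0 (f z), ?_, ?_⟩
    · have := hdis x0 z
      rw [hf0] at this
      rw [abs_le] at this
      rw [mem_sphere'] at hz
      linarith [this.1, this.2]
    · have hmem : f z ∈ sphere y0 (dist y0 (f z)) := by
        simp [mem_sphere, dist_comm]
      have hle : infDist (f x) (sphere y0 (dist y0 (f z))) ≤ dist (f x) (f z) :=
        infDist_le_dist_of_mem hmem
      have h1 := hdis x z
      rw [abs_le] at h1
      have h2 := hdis x0 z
      rw [hf0] at h2
      rw [abs_le] at h2
      rw [mem_sphere'] at hz
      linarith [hle, h1.1, h1.2, h2.1, h2.2, hzd]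
  -- Step 2 : u x0 x ≤ v y0 (f x) + 8ε
  have h2 : u x0 x ≤ v y0 (f x) + 8 * ε := by
    refine lim_le_of_shift (c := 4 * ε) (hv y0 (f x)) (hu x0 x) ?_
    intro r hr
    obtain ⟨w, hw, hwd⟩ := ((isCompact_sphere y0 r).exists_infDist_eq_dist
      (sphere_nonempty_of_geodesic hgY y0 hr) (f x))
    obtain ⟨z, hz⟩ := hnet w
    refine ⟨dist x0 z, ?_, ?_⟩
    · have h2 := hdis x0 z
      rw [hf0] at h2
      rw [abs_le] at h2
      rw [mem_sphere'] at hw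
      have htr : dist y0 (f z) ≥ dist y0 w - dist w (f z) := by
        have := dist_triangle y0 (f z) w
        rw [dist_comm (f z) w] at this
        linarith
      linarith [h2.1, h2.2]
    · have hmem : z ∈ sphere x0 (dist x0 z) := by
        simp [mem_sphere, dist_comm]
      have hle : infDist x (sphere x0 (dist x0 z)) ≤ dist x z :=
        infDist_le_dist_of_mem hmem
      have h1 := hdis x z
      rw [abs_le] at h1
      have h2 := hdis x0 z
      rw [hf0] at h2
      rw [abs_le] at h2
      rw [mem_sphere'] at hw
      have htr1 : dist (f x) (f z) ≤ dist (f x) w + dist w (f z) := dist_triangle _ _ _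
      have htr2 : dist y0 (f z) ≥ dist y0 w - dist w (f z) := by
        have := dist_triangle y0 (f z) w
        rw [dist_comm (f z) w] at this
        linarith
      linarith [hle, h1.1, h1.2, h2.1, h2.2, hwd]
  rw [abs_le]
  constructor <;> linarith
end
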